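/- arXiv:1904.09929 — 7 statements merged into one kernel-verified Lean document; each statement's English description precedes it below -/
import Mathlib

section
/- Let N be a geometric random variable with P(N=k) = r(1-r)^k for k ≥ 0, independent of a sequence of integrable random variables (Δ_m), and suppose the series ∑_{m=0}^∞ E[Δ_m] converges absolutely to θ. Define Z = Δ_N / P(N=N). Then E[Z] = θ. -/
/-!
Split `E[Z]` over the events `{N = k}`. On `{N = k}` the estimator is `Δ_k / p(k)`, and
independence gives `E[Δ_k; N = k] = p(k) E[Δ_k]`, so the `k`-th piece is exactly `E[Δ_k]`
and the pieces sum to `θ`.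
-/

open MeasureTheory ProbabilityTheory

section
variable {Ω β : Type*} [MeasurableSpace Ω] {μ : Measure Ω} [MeasurableSpace β] {N : Ω → β}

theorem hasSum_setIntegral_fiber {E : Type*} [NormedAddCommGroup E] [NormedSpace ℝ E]
    [Countable β] [MeasurableSingletonClass β] (hN : Measurable N) {f : Ω → E}
    (hf : Integrable f μ) :
    HasSum (fun k => ∫ ω in N ⁻¹' {k}, f ω ∂μ) (∫ ω, f ω ∂μ) := by
  have h := hasSum_integral_iUnion (fun k => hN (measurableSet_singleton k))
    (pairwise_disjoint_fiber N) hf.integrableOn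
  rwa [← Set.preimage_iUnion, Set.iUnion_of_singleton, Set.preimage_univ, setIntegral_univ] at h

theorem ProbabilityTheory.IndepFun.setIntegral_preimage_eq_measureReal_mul {X : Ω → ℝ}
    (hindep : IndepFun N X μ) (hN : Measurable N) (hX : AEMeasurable X μ) {s : Set β}
    (hs : MeasurableSet s) :
    ∫ ω in N ⁻¹' s, X ω ∂μ = μ.real (N ⁻¹' s) * ∫ ω, X ω ∂μ :=
  Indep.setIntegral_eq_mul (f := id) hN.comap_le hindep hX ⟨s, hs, rfl⟩
    aestronglyMeasurable_id

theorem integral_div_prob_eq_tsum_integral_of_indepFun [Countable β]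
    [MeasurableSingletonClass β] {Δ : β → Ω → ℝ} (hindep : ∀ k, IndepFun N (Δ k) μ)
    (hN : Measurable N) (hΔ : ∀ k, AEMeasurable (Δ k) μ) {p : β → ℝ}
    (hp : ∀ k, μ.real (N ⁻¹' {k}) = p k) (hp0 : ∀ k, p k ≠ 0)
    (hZ : Integrable (fun ω => Δ (N ω) ω / p (N ω)) μ) :
    ∫ ω, Δ (N ω) ω / p (N ω) ∂μ = ∑' k, ∫ ω, Δ k ω ∂μ := by
  refine (hasSum_setIntegral_fiber hN hZ).tsum_eq.symm.trans (tsum_congr fun k => ?_)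
  calc ∫ ω in N ⁻¹' {k}, Δ (N ω) ω / p (N ω) ∂μ
      = (∫ ω in N ⁻¹' {k}, Δ k ω ∂μ) / p k := by
        rw [← integral_div]
        exact setIntegral_congr_fun (hN (measurableSet_singleton k)) fun ω hω => by rw [hω]
    _ = ∫ ω, Δ k ω ∂μ := by
        rw [(hindep k).setIntegral_preimage_eq_measureReal_mul hN (hΔ k)
          (measurableSet_singleton k), hp k, mul_div_cancel_left₀ _ (hp0 k)]

end

theorem stmt_0_general {Ω : Type*} [MeasurableSpace Ω] (μ : Measure Ω)
    (r : ℝ) (hr : r ∈ Set.Ioo (0 : ℝ) 1)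
    (N : Ω → ℕ) (hN : Measurable N)
    (hgeo : ∀ k : ℕ, μ {ω | N ω = k} = ENNReal.ofReal (r * (1 - r) ^ k))
    (Δ : ℕ → Ω → ℝ) (hΔmeas : ∀ m, Measurable (Δ m))
    (hindep : IndepFun N (fun ω => fun m => Δ m ω) μ)
    (θ : ℝ)
    (hsum : ∑' m : ℕ, ∫ ω, Δ m ω ∂μ = θ)
    (hZint : Integrable (fun ω => Δ (N ω) ω / (r * (1 - r) ^ (N ω))) μ) :
    ∫ ω, Δ (N ω) ω / (r * (1 - r) ^ (N ω)) ∂μ = θ := by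
  have hp_pos : ∀ k : ℕ, 0 < r * (1 - r) ^ k := fun k =>
    mul_pos hr.1 (pow_pos (sub_pos.2 hr.2) k)
  have hp : ∀ k : ℕ, μ.real (N ⁻¹' {k}) = r * (1 - r) ^ k := fun k => by
    rw [measureReal_def, show N ⁻¹' {k} = {ω | N ω = k} from rfl, hgeo k,
      ENNReal.toReal_ofReal (hp_pos k).le]
  rw [← hsum]
  exact integral_div_prob_eq_tsum_integral_of_indepFun
    (fun k => hindep.comp measurable_id (measurable_pi_apply k)) hN
    (fun k => (hΔmeas k).aemeasurable) hp (fun k => (hp_pos k).ne') hZint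

/-- Unbiasedness of the single-term randomized multilevel estimator `Z = Δ_N / p(N)`. -/
theorem stmt_0 {Ω : Type*} [MeasurableSpace Ω] (μ : Measure Ω) [IsProbabilityMeasure μ]
    (r : ℝ) (hr : r ∈ Set.Ioo (0 : ℝ) 1)
    (N : Ω → ℕ) (hN : Measurable N)
    (hgeo : ∀ k : ℕ, μ {ω | N ω = k} = ENNReal.ofReal (r * (1 - r) ^ k))
    (Δ : ℕ → Ω → ℝ) (hΔmeas : ∀ m, Measurable (Δ m))
    (hΔint : ∀ m, Integrable (Δ m) μ)
    (hindep : IndepFun N (fun ω => fun m => Δ m ω) μ)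
    (θ : ℝ)
    (habs : Summable fun m => ∫ ω, |Δ m ω| ∂μ)
    (hsum : ∑' m : ℕ, ∫ ω, Δ m ω ∂μ = θ)
    (hZint : Integrable (fun ω => Δ (N ω) ω / (r * (1 - r) ^ (N ω))) μ) :
    ∫ ω, Δ (N ω) ω / (r * (1 - r) ^ (N ω)) ∂μ = θ :=
  stmt_0_general μ r hr N hN hgeo Δ hΔmeas hindep θ hsum hZint
end

section
/- Let N be geometric with P(N=k)=r(1-r)^k, independent of random variables (Δ_m) satisfying E[Δ_m²] ≤ c·2^{-(1+α)m} for constants c > 0, α > 0. If 1/2 < r < 1 - 2^{-(1+α)}, then E[(Δ_N/p(N))²] = ∑_{k=0}^∞ E[Δ_k²]/p(k) ≤ (c/r) ∑_{k=0}^∞ (2^{1+α}(1-r))^{-k} < ∞. -/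
open MeasureTheory ProbabilityTheory
open scoped ENNReal

/-!
Splitting `Ω` along the events `{N = k}` and using the independence of `N` from the family
`(Δ_m)`, the second moment of `Δ_N / p(N)` is `∑ₖ p(k) E[Δ_k²] / p(k)²`. The bound on
`E[Δ_k²]` turns this into a geometric series of ratio `(2^{1+α}(1-r))⁻¹`, which is `< 1`
exactly when `r < 1 - 2^{-(1+α)}`.
-/

section RandomIndex

variable {Ω β : Type*} [MeasurableSpace Ω] [MeasurableSpace β] {μ : Measure Ω}
  {N : Ω → ℕ} {Y : Ω → β}

theorem setLIntegral_eq_measure_mul_lintegral_of_indepFun (hN : Measurable N)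
    (hY : Measurable Y) (hindep : IndepFun N Y μ) {g : β → ℝ≥0∞} (hg : Measurable g) (k : ℕ) :
    ∫⁻ ω in {ω | N ω = k}, g (Y ω) ∂μ = μ {ω | N ω = k} * ∫⁻ ω, g (Y ω) ∂μ := by
  have hs : MeasurableSet {ω | N ω = k} := hN (measurableSet_singleton k)
  have hind : IndepFun (({k} : Set ℕ).indicator (1 : ℕ → ℝ≥0∞) ∘ N) (g ∘ Y) μ :=
    hindep.comp (measurable_of_countable _) hg
  have hN_ind :
      ∀ ω, ({k} : Set ℕ).indicator (1 : ℕ → ℝ≥0∞) (N ω) = {ω | N ω = k}.indicator 1 ω :=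
    fun ω => (Set.indicator_comp_right N).symm
  calc ∫⁻ ω in {ω | N ω = k}, g (Y ω) ∂μ
      = ∫⁻ ω, ((({k} : Set ℕ).indicator (1 : ℕ → ℝ≥0∞) ∘ N) * (g ∘ Y)) ω ∂μ := by
        rw [← lintegral_indicator hs]
        congr 1
        ext ω
        by_cases h : N ω = k <;> simp [h]
    _ = μ {ω | N ω = k} * ∫⁻ ω, g (Y ω) ∂μ := by
        rw [lintegral_mul_eq_lintegral_mul_lintegral_of_indepFun
          ((measurable_of_countable _).comp hN) (hg.comp hY) hind, ← lintegral_indicator_one hs]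
        simp only [Function.comp_apply, hN_ind]

theorem lintegral_comp_randomIndex (hN : Measurable N) (hY : Measurable Y)
    (hindep : IndepFun N Y μ) {g : ℕ → β → ℝ≥0∞} (hg : ∀ k, Measurable (g k)) :
    ∫⁻ ω, g (N ω) (Y ω) ∂μ = ∑' k, μ {ω | N ω = k} * ∫⁻ ω, g k (Y ω) ∂μ := by
  have hs : ∀ k, MeasurableSet {ω | N ω = k} := fun k => hN (measurableSet_singleton k)
  have hdisj : Pairwise (Function.onFun Disjoint fun k => {ω | N ω = k}) :=
    fun i j hij => Set.disjoint_left.2 fun ω hi hj => hij (hi.symm.trans hj)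
  have hcover : (⋃ k, {ω | N ω = k}) = Set.univ :=
    Set.iUnion_eq_univ_iff.2 fun ω => ⟨N ω, rfl⟩
  rw [← setLIntegral_univ, ← hcover, lintegral_iUnion hs hdisj]
  congr 1
  ext k
  rw [← setLIntegral_eq_measure_mul_lintegral_of_indepFun hN hY hindep (hg k) k]
  exact setLIntegral_congr_fun (hs k) fun ω (hω : N ω = k) => by rw [hω]

variable [IsFiniteMeasure μ] {f : ℕ → β → ℝ}

theorem lintegral_ofReal_comp_randomIndex (hN : Measurable N) (hY : Measurable Y)
    (hindep : IndepFun N Y μ) (hf : ∀ k, Measurable (f k)) (hf0 : ∀ k v, 0 ≤ f k v)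
    (hfi : ∀ k, Integrable (fun ω => f k (Y ω)) μ)
    (hsum : Summable fun k => μ.real {ω | N ω = k} * ∫ ω, f k (Y ω) ∂μ) :
    ∫⁻ ω, ENNReal.ofReal (f (N ω) (Y ω)) ∂μ
      = ENNReal.ofReal (∑' k, μ.real {ω | N ω = k} * ∫ ω, f k (Y ω) ∂μ) := by
  rw [lintegral_comp_randomIndex hN hY hindep (g := fun k v => ENNReal.ofReal (f k v))
      fun k => (hf k).ennreal_ofReal,
    ENNReal.ofReal_tsum_of_nonneg (fun k => mul_nonneg measureReal_nonneg
      (integral_nonneg fun ω => hf0 k _)) hsum]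
  congr 1
  ext k
  rw [ENNReal.ofReal_mul measureReal_nonneg, ofReal_measureReal,
    ofReal_integral_eq_lintegral_ofReal (hfi k) (ae_of_all _ fun ω => hf0 k _)]

theorem integrable_comp_randomIndex_and_integral_eq (hN : Measurable N) (hY : Measurable Y)
    (hindep : IndepFun N Y μ) (hf : ∀ k, Measurable (f k)) (hf0 : ∀ k v, 0 ≤ f k v)
    (hfi : ∀ k, Integrable (fun ω => f k (Y ω)) μ)
    (hsum : Summable fun k => μ.real {ω | N ω = k} * ∫ ω, f k (Y ω) ∂μ) :
    Integrable (fun ω => f (N ω) (Y ω)) μ ∧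
      ∫ ω, f (N ω) (Y ω) ∂μ = ∑' k, μ.real {ω | N ω = k} * ∫ ω, f k (Y ω) ∂μ := by
  have hlint := lintegral_ofReal_comp_randomIndex hN hY hindep hf hf0 hfi hsum
  have hmeas : Measurable fun ω => f (N ω) (Y ω) :=
    (measurable_from_prod_countable_right (f := fun p : ℕ × β => f p.1 p.2) hf).comp
      (hN.prodMk hY)
  have hnonneg : 0 ≤ᵐ[μ] fun ω => f (N ω) (Y ω) := ae_of_all _ fun ω => hf0 _ _
  refine ⟨⟨hmeas.aestronglyMeasurable, ?_⟩, ?_⟩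
  · rw [hasFiniteIntegral_iff_ofReal hnonneg, hlint]
    exact ENNReal.ofReal_lt_top
  · rw [integral_eq_lintegral_of_nonneg_ae hnonneg hmeas.aestronglyMeasurable, hlint,
      ENNReal.toReal_ofReal (tsum_nonneg fun k => mul_nonneg measureReal_nonneg
        (integral_nonneg fun ω => hf0 k _))]

end RandomIndex

theorem summable_inv_pow_of_one_lt {x : ℝ} (hx : 1 < x) :
    Summable fun k : ℕ => (x ^ k)⁻¹ := by
  simp_rw [← inv_pow]
  exact summable_geometric_of_lt_one (by positivity) (inv_lt_one_of_one_lt₀ hx)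

theorem stmt_1_general {Ω : Type*} [MeasurableSpace Ω] (μ : Measure Ω) [IsProbabilityMeasure μ]
    (α : ℝ)
    (r : ℝ) (hr : r ∈ Set.Ioo (1 / 2 : ℝ) (1 - 2 ^ (-(1 + α))))
    (N : Ω → ℕ) (hN : Measurable N)
    (hgeo : ∀ k : ℕ, μ {ω | N ω = k} = ENNReal.ofReal (r * (1 - r) ^ k))
    (Δ : ℕ → Ω → ℝ) (hΔmeas : ∀ m, Measurable (Δ m))
    (hΔsq : ∀ m, Integrable (fun ω => (Δ m ω) ^ 2) μ)
    (c : ℝ)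
    (hbound : ∀ m : ℕ, ∫ ω, (Δ m ω) ^ 2 ∂μ ≤ c * 2 ^ (-(1 + α) * m))
    (hindep : IndepFun N (fun ω => fun m => Δ m ω) μ) :
    Integrable (fun ω => (Δ (N ω) ω / (r * (1 - r) ^ (N ω))) ^ 2) μ ∧
    ∫ ω, (Δ (N ω) ω / (r * (1 - r) ^ (N ω))) ^ 2 ∂μ
      = ∑' k : ℕ, (∫ ω, (Δ k ω) ^ 2 ∂μ) / (r * (1 - r) ^ k) ∧
    ∑' k : ℕ, (∫ ω, (Δ k ω) ^ 2 ∂μ) / (r * (1 - r) ^ k)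
      ≤ (c / r) * ∑' k : ℕ, (((2 : ℝ) ^ (1 + α) * (1 - r)) ^ k)⁻¹ ∧
    Summable (fun k : ℕ => (((2 : ℝ) ^ (1 + α) * (1 - r)) ^ k)⁻¹) := by
  obtain ⟨hr_half, hr_lt⟩ := hr
  have h1r : 0 < 1 - r := by
    have : (0 : ℝ) < 2 ^ (-(1 + α)) := by positivity
    linarith
  have hp : ∀ k : ℕ, 0 < r * (1 - r) ^ k := fun k => by positivity
  have hratio : 1 < (2 : ℝ) ^ (1 + α) * (1 - r) := by
    calc (1 : ℝ) = 2 ^ (1 + α) * 2 ^ (-(1 + α)) := by rw [← Real.rpow_add two_pos]; simp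
      _ < 2 ^ (1 + α) * (1 - r) := by gcongr; linarith
  have hgeom := summable_inv_pow_of_one_lt hratio
  have hterm : ∀ k : ℕ, (∫ ω, (Δ k ω) ^ 2 ∂μ) / (r * (1 - r) ^ k)
      ≤ c / r * (((2 : ℝ) ^ (1 + α) * (1 - r)) ^ k)⁻¹ := fun k => by
    have h2k : (2 : ℝ) ^ (-(1 + α) * k) = (((2 : ℝ) ^ (1 + α)) ^ k)⁻¹ := by
      rw [neg_mul, Real.rpow_neg zero_le_two, Real.rpow_mul zero_le_two, Real.rpow_natCast]
    calc (∫ ω, (Δ k ω) ^ 2 ∂μ) / (r * (1 - r) ^ k)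
        ≤ c * 2 ^ (-(1 + α) * k) / (r * (1 - r) ^ k) := by gcongr; exact hbound k
      _ = c / r * (((2 : ℝ) ^ (1 + α) * (1 - r)) ^ k)⁻¹ := by
        rw [h2k, mul_pow]; field_simp
  have hsum : Summable fun k : ℕ => (∫ ω, (Δ k ω) ^ 2 ∂μ) / (r * (1 - r) ^ k) :=
    (hgeom.mul_left (c / r)).of_nonneg_of_le
      (fun k => div_nonneg (integral_nonneg fun ω => sq_nonneg _) (hp k).le) hterm
  have hlevel : ∀ k : ℕ, μ.real {ω | N ω = k} * ∫ ω, (Δ k ω / (r * (1 - r) ^ k)) ^ 2 ∂μ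
      = (∫ ω, (Δ k ω) ^ 2 ∂μ) / (r * (1 - r) ^ k) := fun k => by
    simp_rw [measureReal_def, hgeo, ENNReal.toReal_ofReal (hp k).le, div_pow, integral_div]
    field_simp
  obtain ⟨hint, heq⟩ := integrable_comp_randomIndex_and_integral_eq (Y := fun ω m => Δ m ω)
    (f := fun k v => (v k / (r * (1 - r) ^ k)) ^ 2) hN (measurable_pi_lambda _ hΔmeas) hindep
    (fun k => by fun_prop) (fun k v => sq_nonneg _)
    (fun k => by simp_rw [div_pow]; exact (hΔsq k).div_const _)
    (by simpa only [hlevel] using hsum)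
  refine ⟨hint, heq.trans (tsum_congr hlevel), ?_, hgeom⟩
  rw [← tsum_mul_left]
  exact hsum.tsum_le_tsum hterm (hgeom.mul_left _)

/-- Finite variance of the randomized multilevel estimator: second-moment identity and bound. -/
theorem stmt_1 {Ω : Type*} [MeasurableSpace Ω] (μ : Measure Ω) [IsProbabilityMeasure μ]
    (α : ℝ) (hα : 0 < α)
    (r : ℝ) (hr : r ∈ Set.Ioo (1 / 2 : ℝ) (1 - 2 ^ (-(1 + α))))
    (N : Ω → ℕ) (hN : Measurable N)
    (hgeo : ∀ k : ℕ, μ {ω | N ω = k} = ENNReal.ofReal (r * (1 - r) ^ k))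
    (Δ : ℕ → Ω → ℝ) (hΔmeas : ∀ m, Measurable (Δ m))
    (hΔsq : ∀ m, Integrable (fun ω => (Δ m ω) ^ 2) μ)
    (c : ℝ) (hc : 0 < c)
    (hbound : ∀ m : ℕ, ∫ ω, (Δ m ω) ^ 2 ∂μ ≤ c * 2 ^ (-(1 + α) * m))
    (hindep : IndepFun N (fun ω => fun m => Δ m ω) μ) :
    Integrable (fun ω => (Δ (N ω) ω / (r * (1 - r) ^ (N ω))) ^ 2) μ ∧
    ∫ ω, (Δ (N ω) ω / (r * (1 - r) ^ (N ω))) ^ 2 ∂μ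
      = ∑' k : ℕ, (∫ ω, (Δ k ω) ^ 2 ∂μ) / (r * (1 - r) ^ k) ∧
    ∑' k : ℕ, (∫ ω, (Δ k ω) ^ 2 ∂μ) / (r * (1 - r) ^ k)
      ≤ (c / r) * ∑' k : ℕ, (((2 : ℝ) ^ (1 + α) * (1 - r)) ^ k)⁻¹ ∧
    Summable (fun k : ℕ => (((2 : ℝ) ^ (1 + α) * (1 - r)) ^ k)⁻¹) :=
  stmt_1_general μ α r hr N hN hgeo Δ hΔmeas hΔsq c hbound hindep
end

section
/- For α > 0, the product W(r) = (∑_{k=0}^∞ 2^{-(1+α)k}/p(k)) · (∑_{k=0}^∞ 2^k p(k)), where p(k)=r(1-r)^k, over r ∈ (1/2, 1-2^{-(1+α)}), is minimized at r = 1 - 2^{-(1+α/2)}. -/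
/-!
Both series are geometric. Writing `q = 1 - r` and `c = 2^{-(1+α)}`, the variance series sums
to `q / (r (q - c))` and the cost series to `r / (1 - 2q)`, so the bound is
`q / ((q - c)(1 - 2q))`. For `t² = c/2` one has the identity
`s (t - c)(1 - 2t) - t (s - c)(1 - 2s) = 2t (s - t)²`, so this function of `q` is minimal at
`q = t = √(c/2) = 2^{-(1+α/2)}`.
-/

/-- The work-normalized variance bound for a geometric randomization level `N` with
success probability `r`. -/
noncomputable def workNormalizedBound (α r : ℝ) : ℝ :=
  (∑' k : ℕ, (2 : ℝ) ^ (-(1 + α) * k) / (r * (1 - r) ^ k)) *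
    (∑' k : ℕ, (2 : ℝ) ^ (k : ℝ) * (r * (1 - r) ^ k))

lemma tsum_pow_div_mul_pow (r : ℝ) {c q : ℝ} (hc : 0 ≤ c) (hcq : c < q) :
    ∑' k : ℕ, c ^ k / (r * q ^ k) = q / (r * (q - c)) := by
  have hq : 0 < q := hc.trans_lt hcq
  have hratio : c / q < 1 := (div_lt_one hq).2 hcq
  calc ∑' k : ℕ, c ^ k / (r * q ^ k) = ∑' k : ℕ, r⁻¹ * (c / q) ^ k := by
        congr 1 with k
        ring
    _ = r⁻¹ * (1 - c / q)⁻¹ := by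
        rw [tsum_mul_left, tsum_geometric_of_lt_one (by positivity) hratio]
    _ = q / (r * (q - c)) := by
        rw [one_sub_div hq.ne', inv_div, inv_mul_eq_div, div_div, mul_comm]

lemma tsum_pow_mul_mul_pow (r : ℝ) {a q : ℝ} (h0 : 0 ≤ a * q) (h1 : a * q < 1) :
    ∑' k : ℕ, a ^ k * (r * q ^ k) = r / (1 - a * q) := by
  calc ∑' k : ℕ, a ^ k * (r * q ^ k) = ∑' k : ℕ, r * (a * q) ^ k := by
        congr 1 with k
        ring
    _ = r / (1 - a * q) := by
        rw [tsum_mul_left, tsum_geometric_of_lt_one h0 h1, div_eq_mul_inv]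

lemma workNormalizedBound_eq {α r : ℝ} (hr : r ∈ Set.Ioo (1 / 2 : ℝ) (1 - 2 ^ (-(1 + α)))) :
    workNormalizedBound α r
      = (1 - r) / ((1 - r - 2 ^ (-(1 + α))) * (1 - 2 * (1 - r))) := by
  obtain ⟨hr_gt, hr_lt⟩ := hr
  have hc : (0 : ℝ) ≤ 2 ^ (-(1 + α)) := by positivity
  have hr0 : r ≠ 0 := by linarith
  simp only [workNormalizedBound, Real.rpow_mul_natCast zero_le_two, Real.rpow_natCast]
  rw [tsum_pow_div_mul_pow r hc (by linarith),
    tsum_pow_mul_mul_pow r (by linarith) (by linarith)]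
  field_simp

lemma div_sub_mul_one_sub_two_mul_le {c s t : ℝ} (ht_sq : t ^ 2 = c / 2) (ht : c < t)
    (ht' : t < 1 / 2) (hs : c < s) (hs' : s < 1 / 2) :
    t / ((t - c) * (1 - 2 * t)) ≤ s / ((s - c) * (1 - 2 * s)) := by
  have ht0 : 0 < t := by nlinarith
  have key : s * ((t - c) * (1 - 2 * t)) - t * ((s - c) * (1 - 2 * s)) = 2 * t * (s - t) ^ 2 := by
    linear_combination (2 * s - 2 * t) * ht_sq
  rw [div_le_div_iff₀ (by apply mul_pos <;> linarith) (by apply mul_pos <;> linarith)]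
  nlinarith [mul_nonneg ht0.le (sq_nonneg (s - t))]

lemma two_rpow_neg_one_add_half_sq (α : ℝ) :
    ((2 : ℝ) ^ (-(1 + α / 2))) ^ 2 = 2 ^ (-(1 + α)) / 2 := by
  rw [← Real.rpow_mul_natCast zero_le_two, show -(1 + α / 2) * ((2 : ℕ) : ℝ) = -(1 + α) + -1 by
    push_cast; ring, Real.rpow_add two_pos, Real.rpow_neg_one, div_eq_mul_inv]

/-- The product of the variance-bound series and the expected-cost series is minimized over
`r ∈ (1/2, 1 - 2^{-(1+α)})` at `r = 1 - 2^{-(1+α/2)}`. -/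
theorem stmt_3 (α : ℝ) (hα : 0 < α) :
    (1 - (2 : ℝ) ^ (-(1 + α / 2)) ∈ Set.Ioo (1 / 2 : ℝ) (1 - 2 ^ (-(1 + α)))) ∧
    ∀ r ∈ Set.Ioo (1 / 2 : ℝ) (1 - 2 ^ (-(1 + α))),
      workNormalizedBound α (1 - (2 : ℝ) ^ (-(1 + α / 2))) ≤ workNormalizedBound α r := by
  have hct : (2 : ℝ) ^ (-(1 + α)) < 2 ^ (-(1 + α / 2)) :=
    Real.rpow_lt_rpow_of_exponent_lt one_lt_two (by linarith)
  have ht_half : (2 : ℝ) ^ (-(1 + α / 2)) < 1 / 2 := by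
    simpa [Real.rpow_neg_one] using
      Real.rpow_lt_rpow_of_exponent_lt one_lt_two (by linarith : -(1 + α / 2) < -1)
  have hmem : 1 - (2 : ℝ) ^ (-(1 + α / 2)) ∈ Set.Ioo (1 / 2 : ℝ) (1 - 2 ^ (-(1 + α))) :=
    ⟨by linarith, by linarith⟩
  refine ⟨hmem, fun r hr => ?_⟩
  rw [workNormalizedBound_eq hmem, workNormalizedBound_eq hr, sub_sub_cancel]
  exact div_sub_mul_one_sub_two_mul_le (two_rpow_neg_one_add_half_sq α) hct ht_half
    (by linarith [hr.2]) (by linarith [hr.1])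
end

section
/- Suppose X_1,...,X_n are iid ℝ^d-valued with mean ν and E[‖X_1‖²] < ∞. Fix δ > 0 and δ' ∈ (0,1), and let N_n = #{1 ≤ i ≤ n : ‖X_i − ν‖ ≥ n^{1-δ'}}. Then conditionally on N_n = 0, the increments are bounded by n^{1-δ'} and for every γ > 0, P(‖S_n/n − ν‖ > δ/2, N_n = 0) = o(n^{-γ}) as n → ∞. -/
/-!
On the event that every increment satisfies `‖X i - ν‖ < M = n ^ (1 - δ')`, the centred sum equals
the sum of the increments truncated at `M`. If the empirical mean is `δ / 2`-far from `ν`, some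
coordinate of this truncated sum (in an orthonormal basis) exceeds `n t` in absolute value, with
`t` depending only on `δ` and the dimension. Truncated increments are bounded by `M`, so Chernoff's
bound at `λ = 1 / M`, with `exp x ≤ 1 + x + x²` for `|x| ≤ 1`, bounds each such tail by
`exp (-n ^ δ' (t - 2 σ² / M))`: truncation moves the mean of a centred increment by at most
`σ² / M`. Since `M → ∞`, this is eventually `exp (-(t / 2) n ^ δ')`, which beats every power of `n`.
-/

open MeasureTheory ProbabilityTheory Filter Real Metric

section Chernoff

variable {Ω ι : Type*} [MeasurableSpace Ω] {μ : Measure Ω} [IsProbabilityMeasure μ]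

lemma mgf_le_exp_of_abs_le {V : Ω → ℝ} (hV : Measurable V) {M t : ℝ} (hb : ∀ ω, |V ω| ≤ M)
    (ht : 0 ≤ t) (htM : t * M ≤ 1) :
    mgf V μ t ≤ exp (t * ∫ ω, V ω ∂μ + t ^ 2 * ∫ ω, V ω ^ 2 ∂μ) := by
  have htV : ∀ ω, |t * V ω| ≤ 1 := fun ω => by
    rw [abs_mul, abs_of_nonneg ht]
    exact (mul_le_mul_of_nonneg_left (hb ω) ht).trans htM
  have hVint : Integrable V μ :=
    Integrable.of_bound hV.aestronglyMeasurable M (.of_forall hb)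
  have hV2int : Integrable (fun ω => V ω ^ 2) μ :=
    Integrable.of_bound (hV.pow_const 2).aestronglyMeasurable (M ^ 2) (.of_forall fun ω => by
      rw [norm_pow, Real.norm_eq_abs]
      exact pow_le_pow_left₀ (abs_nonneg _) (hb ω) 2)
  have hlin : Integrable (fun ω => 1 + t * V ω) μ := (integrable_const 1).add (hVint.const_mul t)
  calc mgf V μ t = ∫ ω, exp (t * V ω) ∂μ := rfl
    _ ≤ ∫ ω, (1 + t * V ω + t ^ 2 * V ω ^ 2) ∂μ := by
        refine integral_mono (Integrable.of_bound (hV.const_mul t).exp.aestronglyMeasurable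
          (exp 1) (.of_forall fun ω => ?_)) (hlin.add (hV2int.const_mul _)) fun ω => ?_
        · rw [norm_of_nonneg (exp_nonneg _)]
          exact exp_le_exp.mpr (abs_le.mp (htV ω)).2
        · have := (abs_le.mp (abs_exp_sub_one_sub_id_le (htV ω))).2
          linarith
    _ = 1 + (t * ∫ ω, V ω ∂μ + t ^ 2 * ∫ ω, V ω ^ 2 ∂μ) := by
        rw [integral_add hlin (hV2int.const_mul _),
          integral_add (integrable_const 1) (hVint.const_mul t), integral_const_mul,
          integral_const_mul]
        simp only [integral_const, probReal_univ, smul_eq_mul, one_mul]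
        ring
    _ ≤ exp (t * ∫ ω, V ω ∂μ + t ^ 2 * ∫ ω, V ω ^ 2 ∂μ) :=
        by linarith [add_one_le_exp (t * ∫ ω, V ω ∂μ + t ^ 2 * ∫ ω, V ω ^ 2 ∂μ)]

lemma measureReal_sum_ge_le_exp_of_abs_le {V : ι → Ω → ℝ} (hV : ∀ i, Measurable (V i))
    (hindep : iIndepFun V μ) (s : Finset ι) {M t : ℝ} (hb : ∀ i ω, |V i ω| ≤ M)
    (ht : 0 ≤ t) (htM : t * M ≤ 1) (a : ℝ) :
    μ.real {ω | a ≤ ∑ i ∈ s, V i ω} ≤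
      exp (-t * a + ∑ i ∈ s, (t * ∫ ω, V i ω ∂μ + t ^ 2 * ∫ ω, V i ω ^ 2 ∂μ)) := by
  have hexp : ∀ i, Integrable (fun ω => exp (t * V i ω)) μ := fun i =>
    Integrable.of_bound ((hV i).const_mul t).exp.aestronglyMeasurable (exp (t * M))
      (.of_forall fun ω => by
        rw [norm_of_nonneg (exp_nonneg _)]
        exact exp_le_exp.mpr (mul_le_mul_of_nonneg_left (abs_le.mp (hb i ω)).2 ht))
  calc μ.real {ω | a ≤ ∑ i ∈ s, V i ω}
      ≤ exp (-t * a) * mgf (∑ i ∈ s, V i) μ t := by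
        simpa only [Finset.sum_apply] using
          measure_ge_le_exp_mul_mgf a ht (hindep.integrable_exp_mul_sum hV fun i _ => hexp i)
    _ ≤ exp (-t * a) * ∏ i ∈ s, exp (t * ∫ ω, V i ω ∂μ + t ^ 2 * ∫ ω, V i ω ^ 2 ∂μ) := by
        rw [hindep.mgf_sum hV]
        gcongr with i
        · exact fun i _ => mgf_nonneg
        · exact mgf_le_exp_of_abs_le (hV i) (hb i) ht htM
    _ = exp (-t * a + ∑ i ∈ s, (t * ∫ ω, V i ω ∂μ + t ^ 2 * ∫ ω, V i ω ^ 2 ∂μ)) := by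
        rw [← exp_sum, ← exp_add]

end Chernoff

section Truncation

variable {E : Type*} [NormedAddCommGroup E] [NormedSpace ℝ E] {ℓ : E →L[ℝ] ℝ} {M : ℝ}

lemma abs_apply_le_norm_of_opNorm_le_one (hℓ : ‖ℓ‖ ≤ 1) (z : E) : |ℓ z| ≤ ‖z‖ :=
  (ℓ.le_opNorm z).trans (mul_le_of_le_one_left (norm_nonneg z) hℓ)

lemma abs_indicator_ball_le_norm (hℓ : ‖ℓ‖ ≤ 1) (z : E) : |(ball 0 M).indicator ℓ z| ≤ ‖z‖ := by
  by_cases hz : z ∈ ball 0 M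
  · rw [Set.indicator_of_mem hz]
    exact abs_apply_le_norm_of_opNorm_le_one hℓ z
  · simp [Set.indicator_of_notMem hz]

lemma abs_indicator_ball_le (hℓ : ‖ℓ‖ ≤ 1) (hM : 0 ≤ M) (z : E) :
    |(ball 0 M).indicator ℓ z| ≤ M := by
  by_cases hz : z ∈ ball 0 M
  · exact (abs_indicator_ball_le_norm hℓ z).trans (mem_ball_zero_iff.mp hz).le
  · simpa [Set.indicator_of_notMem hz] using hM

lemma abs_sub_indicator_ball_le (hℓ : ‖ℓ‖ ≤ 1) (hM : 0 < M) (z : E) :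
    |ℓ z - (ball 0 M).indicator ℓ z| ≤ ‖z‖ ^ 2 / M := by
  by_cases hz : z ∈ ball 0 M
  · rw [Set.indicator_of_mem hz, sub_self, abs_zero]
    positivity
  · rw [Set.indicator_of_notMem hz, sub_zero, le_div_iff₀ hM, sq]
    exact mul_le_mul (abs_apply_le_norm_of_opNorm_le_one hℓ z) (by simpa using hz) hM.le
      (norm_nonneg z)

variable {Ω : Type*} [MeasurableSpace Ω] {μ : Measure Ω} [IsProbabilityMeasure μ] {Z : Ω → E}

lemma integral_sq_indicator_ball_le (hZ : MemLp Z 2 μ) (hℓ : ‖ℓ‖ ≤ 1) :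
    ∫ ω, (ball 0 M).indicator ℓ (Z ω) ^ 2 ∂μ ≤ ∫ ω, ‖Z ω‖ ^ 2 ∂μ := by
  refine integral_mono_of_nonneg (.of_forall fun ω => sq_nonneg _) hZ.integrable_norm_pow'
    (.of_forall fun ω => ?_)
  simpa [sq_abs] using pow_le_pow_left₀ (abs_nonneg _) (abs_indicator_ball_le_norm hℓ (Z ω)) 2

variable [MeasurableSpace E] [BorelSpace E] [CompleteSpace E]

lemma abs_integral_indicator_ball_le (hZ : MemLp Z 2 μ) (hmean : ∫ ω, Z ω ∂μ = 0)
    (hℓ : ‖ℓ‖ ≤ 1) (hM : 0 < M) :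
    |∫ ω, (ball 0 M).indicator ℓ (Z ω) ∂μ| ≤ (∫ ω, ‖Z ω‖ ^ 2 ∂μ) / M := by
  have hZint : Integrable Z μ := hZ.integrable one_le_two
  have hℓZ : Integrable (fun ω => ℓ (Z ω)) μ := ℓ.integrable_comp hZint
  have hT : Integrable (fun ω => (ball 0 M).indicator ℓ (Z ω)) μ :=
    hℓZ.mono ((ℓ.measurable.indicator measurableSet_ball).comp_aemeasurable
      hZ.aemeasurable).aestronglyMeasurable
      (.of_forall fun ω => norm_indicator_le_norm_self _ _)
  calc |∫ ω, (ball 0 M).indicator ℓ (Z ω) ∂μ|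
      = |∫ ω, (ℓ (Z ω) - (ball 0 M).indicator ℓ (Z ω)) ∂μ| := by
        rw [integral_sub hℓZ hT, ℓ.integral_comp_comm hZint, hmean, map_zero, zero_sub, abs_neg]
    _ ≤ ∫ ω, |ℓ (Z ω) - (ball 0 M).indicator ℓ (Z ω)| ∂μ := abs_integral_le_integral_abs
    _ ≤ ∫ ω, ‖Z ω‖ ^ 2 / M ∂μ :=
        integral_mono (hℓZ.sub hT).abs (hZ.integrable_norm_pow'.div_const M)
          fun ω => abs_sub_indicator_ball_le hℓ hM (Z ω)
    _ = (∫ ω, ‖Z ω‖ ^ 2 ∂μ) / M := integral_div M _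

end Truncation

section TruncatedSums

variable {Ω ι E : Type*} [MeasurableSpace Ω] {μ : Measure Ω} [IsProbabilityMeasure μ]
  [NormedAddCommGroup E] [NormedSpace ℝ E] [CompleteSpace E] [MeasurableSpace E] [BorelSpace E]
  {Z : ι → Ω → E} {ℓ : E →L[ℝ] ℝ} {M σ2 : ℝ}

lemma measureReal_sum_indicator_ball_ge_le_exp (hZmeas : ∀ i, Measurable (Z i))
    (hindep : iIndepFun Z μ) (hZ : ∀ i, MemLp (Z i) 2 μ) (hmean : ∀ i, ∫ ω, Z i ω ∂μ = 0)
    (hσ : ∀ i, ∫ ω, ‖Z i ω‖ ^ 2 ∂μ ≤ σ2) (hℓ : ‖ℓ‖ ≤ 1) (hM : 0 < M) (s : Finset ι) (a : ℝ) :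
    μ.real {ω | s.card * a ≤ ∑ i ∈ s, (ball 0 M).indicator ℓ (Z i ω)} ≤
      exp (-(s.card / M) * (a - 2 * σ2 / M)) := by
  have hT : Measurable ((ball (0 : E) M).indicator ℓ) :=
    ℓ.measurable.indicator measurableSet_ball
  refine (measureReal_sum_ge_le_exp_of_abs_le (V := fun i ω => (ball 0 M).indicator ℓ (Z i ω))
    (fun i => hT.comp (hZmeas i)) (hindep.comp (fun _ => _) fun _ => hT) s
    (fun i ω => abs_indicator_ball_le hℓ hM.le (Z i ω)) (one_div_nonneg.mpr hM.le)
    (by rw [one_div_mul_cancel hM.ne']) _).trans (exp_le_exp.mpr ?_)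
  have hterm : ∀ i ∈ s, 1 / M * ∫ ω, (ball 0 M).indicator ℓ (Z i ω) ∂μ +
      (1 / M) ^ 2 * ∫ ω, (ball 0 M).indicator ℓ (Z i ω) ^ 2 ∂μ ≤ 2 * σ2 / M ^ 2 := by
    intro i _
    have h1 := (abs_le.mp (abs_integral_indicator_ball_le (hZ i) (hmean i) hℓ hM)).2
    have h2 := integral_sq_indicator_ball_le (M := M) (hZ i) hℓ
    calc 1 / M * ∫ ω, (ball 0 M).indicator ℓ (Z i ω) ∂μ +
          (1 / M) ^ 2 * ∫ ω, (ball 0 M).indicator ℓ (Z i ω) ^ 2 ∂μ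
        ≤ 1 / M * ((∫ ω, ‖Z i ω‖ ^ 2 ∂μ) / M) + (1 / M) ^ 2 * ∫ ω, ‖Z i ω‖ ^ 2 ∂μ := by
          gcongr
      _ = 2 * (∫ ω, ‖Z i ω‖ ^ 2 ∂μ) / M ^ 2 := by ring
      _ ≤ 2 * σ2 / M ^ 2 := by grw [hσ i]
  calc -(1 / M) * (s.card * a) + ∑ i ∈ s, (1 / M * ∫ ω, (ball 0 M).indicator ℓ (Z i ω) ∂μ +
        (1 / M) ^ 2 * ∫ ω, (ball 0 M).indicator ℓ (Z i ω) ^ 2 ∂μ)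
      ≤ -(1 / M) * (s.card * a) + s.card * (2 * σ2 / M ^ 2) := by
        gcongr
        simpa using Finset.sum_le_sum hterm
    _ = -(s.card / M) * (a - 2 * σ2 / M) := by
        field_simp
        ring

lemma measureReal_abs_sum_indicator_ball_ge_le_exp (hZmeas : ∀ i, Measurable (Z i))
    (hindep : iIndepFun Z μ) (hZ : ∀ i, MemLp (Z i) 2 μ) (hmean : ∀ i, ∫ ω, Z i ω ∂μ = 0)
    (hσ : ∀ i, ∫ ω, ‖Z i ω‖ ^ 2 ∂μ ≤ σ2) (hℓ : ‖ℓ‖ ≤ 1) (hM : 0 < M) (s : Finset ι) (a : ℝ) :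
    μ.real {ω | s.card * a ≤ |∑ i ∈ s, (ball 0 M).indicator ℓ (Z i ω)|} ≤
      2 * exp (-(s.card / M) * (a - 2 * σ2 / M)) := by
  have hneg : ∀ z, (ball (0 : E) M).indicator (⇑(-ℓ)) z = -(ball 0 M).indicator ℓ z := fun z => by
    by_cases hz : z ∈ ball (0 : E) M <;> simp [hz]
  have hsplit : {ω | s.card * a ≤ |∑ i ∈ s, (ball 0 M).indicator ℓ (Z i ω)|} =
      {ω | s.card * a ≤ ∑ i ∈ s, (ball 0 M).indicator ℓ (Z i ω)} ∪
        {ω | s.card * a ≤ ∑ i ∈ s, (ball 0 M).indicator (⇑(-ℓ)) (Z i ω)} := by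
    ext ω
    simp only [Set.mem_ofPred_eq, Set.mem_union, hneg, Finset.sum_neg_distrib, le_abs]
  rw [hsplit, two_mul]
  refine (measureReal_union_le _ _).trans (add_le_add ?_ ?_)
  · exact measureReal_sum_indicator_ball_ge_le_exp hZmeas hindep hZ hmean hσ hℓ hM s a
  · exact measureReal_sum_indicator_ball_ge_le_exp hZmeas hindep hZ hmean hσ
      (by rwa [norm_neg]) hM s a

end TruncatedSums

section FiniteDimensional

open scoped RealInnerProductSpace

variable {E : Type*} [NormedAddCommGroup E] [InnerProductSpace ℝ E]

lemma OrthonormalBasis.exists_le_abs_inner_of_lt_norm {ι : Type*} [Fintype ι]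
    (b : OrthonormalBasis ι ℝ E) {a r : ℝ} (ha : 0 ≤ a) (har : √(Fintype.card ι) * a ≤ r)
    {x : E} (hx : r < ‖x‖) : ∃ i, a ≤ |⟪b i, x⟫| := by
  by_contra! h
  have hsup : ⨆ i, ‖⟪b i, x⟫‖ ≤ a := Real.iSup_le (fun i => (h i).le) ha
  have := b.norm_le_card_mul_iSup_norm_inner x
  have := mul_le_mul_of_nonneg_left hsup (Real.sqrt_nonneg (Fintype.card ι))
  linarith

variable [FiniteDimensional ℝ E] [MeasurableSpace E] [BorelSpace E]
  {Ω ι : Type*} [MeasurableSpace Ω] {μ : Measure Ω} [IsProbabilityMeasure μ]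
  {Z : ι → Ω → E} {M σ2 : ℝ}

lemma measureReal_norm_sum_gt_of_norm_lt_le_exp (hZmeas : ∀ i, Measurable (Z i))
    (hindep : iIndepFun Z μ) (hZ : ∀ i, MemLp (Z i) 2 μ) (hmean : ∀ i, ∫ ω, Z i ω ∂μ = 0)
    (hσ : ∀ i, ∫ ω, ‖Z i ω‖ ^ 2 ∂μ ≤ σ2) (hM : 0 < M) (s : Finset ι) {a r : ℝ} (ha : 0 ≤ a)
    (har : √(Module.finrank ℝ E) * a ≤ r) :
    μ.real {ω | s.card * r < ‖∑ i ∈ s, Z i ω‖ ∧ ∀ i ∈ s, ‖Z i ω‖ < M} ≤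
      2 * Module.finrank ℝ E * exp (-(s.card / M) * (a - 2 * σ2 / M)) := by
  set b := stdOrthonormalBasis ℝ E
  have hsub : {ω | s.card * r < ‖∑ i ∈ s, Z i ω‖ ∧ ∀ i ∈ s, ‖Z i ω‖ < M} ⊆
      ⋃ j, {ω | s.card * a ≤ |∑ i ∈ s, (ball 0 M).indicator (innerSL ℝ (b j)) (Z i ω)|} := by
    rintro ω ⟨hr, hsmall⟩
    have hsar : √(Fintype.card (Fin (Module.finrank ℝ E))) * (s.card * a) ≤ s.card * r := by
      rw [Fintype.card_fin, mul_left_comm]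
      exact mul_le_mul_of_nonneg_left har (Nat.cast_nonneg _)
    obtain ⟨j, hj⟩ := b.exists_le_abs_inner_of_lt_norm (by positivity) hsar hr
    refine Set.mem_iUnion.mpr ⟨j, ?_⟩
    have htrunc :
        ∑ i ∈ s, (ball 0 M).indicator (innerSL ℝ (b j)) (Z i ω) = ⟪b j, ∑ i ∈ s, Z i ω⟫ := by
      rw [inner_sum]
      refine Finset.sum_congr rfl fun i hi => ?_
      rw [Set.indicator_of_mem (mem_ball_zero_iff.mpr (hsmall i hi)), innerSL_apply_apply]
    simpa only [Set.mem_ofPred_eq, htrunc] using hj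
  calc μ.real {ω | s.card * r < ‖∑ i ∈ s, Z i ω‖ ∧ ∀ i ∈ s, ‖Z i ω‖ < M}
      ≤ ∑ j, μ.real {ω | s.card * a ≤ |∑ i ∈ s, (ball 0 M).indicator (innerSL ℝ (b j)) (Z i ω)|} :=
        (measureReal_mono hsub).trans (measureReal_iUnion_fintype_le _)
    _ ≤ ∑ _j : Fin (Module.finrank ℝ E), 2 * exp (-(s.card / M) * (a - 2 * σ2 / M)) := by
        gcongr with j
        refine measureReal_abs_sum_indicator_ball_ge_le_exp hZmeas hindep hZ hmean hσ ?_ hM s a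
        rw [innerSL_apply_norm, b.norm_eq_one]
    _ = 2 * Module.finrank ℝ E * exp (-(s.card / M) * (a - 2 * σ2 / M)) := by
        rw [Finset.sum_const, Finset.card_univ, Fintype.card_fin, nsmul_eq_mul]
        ring

end FiniteDimensional

lemma tendsto_exp_neg_mul_rpow_mul_rpow_atTop {c p : ℝ} (hc : 0 < c) (hp : 0 < p) (γ : ℝ) :
    Tendsto (fun n : ℕ => exp (-c * (n : ℝ) ^ p) * (n : ℝ) ^ γ) atTop (nhds 0) := by
  have hpow : Tendsto (fun n : ℕ => (n : ℝ) ^ p) atTop atTop :=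
    (tendsto_rpow_atTop hp).comp tendsto_natCast_atTop_atTop
  refine ((tendsto_rpow_mul_exp_neg_mul_atTop_nhds_zero (γ / p) c hc).comp hpow).congr fun n => ?_
  rw [Function.comp_apply, ← rpow_mul (Nat.cast_nonneg n), mul_div_cancel₀ γ hp.ne', mul_comm]

section Mean

variable {E : Type*} [NormedAddCommGroup E] [InnerProductSpace ℝ E] [FiniteDimensional ℝ E]
  [MeasurableSpace E] [BorelSpace E] {Ω : Type*} [MeasurableSpace Ω] {μ : Measure Ω}
  [IsProbabilityMeasure μ]

lemma measureReal_norm_mean_sub_gt_le_exp {X : ℕ → Ω → E} (hmeas : ∀ i, Measurable (X i))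
    (hindep : iIndepFun X μ) (hident : ∀ i, IdentDistrib (X i) (X 1) μ μ) {ν : E}
    (hν : ∫ ω, X 1 ω ∂μ = ν) (hmom : Integrable (fun ω => ‖X 1 ω‖ ^ 2) μ) {n : ℕ} (hn : n ≠ 0)
    {M a r : ℝ} (hM : 0 < M) (ha : 0 ≤ a) (har : √(Module.finrank ℝ E) * a ≤ r) :
    μ.real {ω | r < ‖(n : ℝ)⁻¹ • (∑ i ∈ Finset.range n, X (i + 1) ω) - ν‖ ∧
        ∀ i ∈ Finset.range n, ‖X (i + 1) ω - ν‖ < M} ≤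
      2 * Module.finrank ℝ E * exp (-(n / M) * (a - 2 * (∫ ω, ‖X 1 ω - ν‖ ^ 2 ∂μ) / M)) := by
  have hX1 : MemLp (X 1) 2 μ :=
    (memLp_two_iff_integrable_sq_norm (hmeas 1).aestronglyMeasurable).mpr hmom
  have hX : ∀ i, MemLp (X i) 2 μ := fun i => (hident i).memLp_iff.mpr hX1
  have hmean : ∀ i, ∫ ω, (X (i + 1) ω - ν) ∂μ = 0 := fun i => by
    rw [integral_sub ((hX (i + 1)).integrable one_le_two) (integrable_const ν),
      (hident (i + 1)).integral_eq, hν]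
    simp
  have hσ : ∀ i, ∫ ω, ‖X (i + 1) ω - ν‖ ^ 2 ∂μ ≤ ∫ ω, ‖X 1 ω - ν‖ ^ 2 ∂μ := fun i =>
    ((hident (i + 1)).comp ((measurable_id.sub_const ν).norm.pow_const 2)).integral_eq.le
  have hevent : {ω | r < ‖(n : ℝ)⁻¹ • (∑ i ∈ Finset.range n, X (i + 1) ω) - ν‖ ∧
        ∀ i ∈ Finset.range n, ‖X (i + 1) ω - ν‖ < M} =
      {ω | n * r < ‖∑ i ∈ Finset.range n, (X (i + 1) ω - ν)‖ ∧
        ∀ i ∈ Finset.range n, ‖X (i + 1) ω - ν‖ < M} := by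
    have hn' : (0 : ℝ) < n := Nat.cast_pos.mpr (Nat.pos_of_ne_zero hn)
    ext ω
    have hsum : ∑ i ∈ Finset.range n, (X (i + 1) ω - ν) =
        (n : ℝ) • ((n : ℝ)⁻¹ • (∑ i ∈ Finset.range n, X (i + 1) ω) - ν) := by
      rw [smul_sub, smul_inv_smul₀ hn'.ne', Finset.sum_sub_distrib, Finset.sum_const,
        Finset.card_range, Nat.cast_smul_eq_nsmul]
    rw [Set.mem_ofPred_eq, Set.mem_ofPred_eq, hsum, norm_smul, Real.norm_of_nonneg hn'.le,
      mul_lt_mul_iff_right₀ hn']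
  rw [hevent]
  simpa only [Finset.card_range] using measureReal_norm_sum_gt_of_norm_lt_le_exp
    (Z := fun i ω => X (i + 1) ω - ν) (s := Finset.range n)
    (fun i => (hmeas (i + 1)).sub_const ν)
    ((hindep.precomp Nat.succ_injective).comp (fun _ x => x - ν) fun _ => measurable_id.sub_const ν)
    (fun i => (hX (i + 1)).sub (memLp_const ν)) hmean hσ hM ha har

lemma eventually_measureReal_norm_mean_sub_gt_le_exp {X : ℕ → Ω → E}
    (hmeas : ∀ i, Measurable (X i)) (hindep : iIndepFun X μ)
    (hident : ∀ i, IdentDistrib (X i) (X 1) μ μ) {ν : E} (hν : ∫ ω, X 1 ω ∂μ = ν)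
    (hmom : Integrable (fun ω => ‖X 1 ω‖ ^ 2) μ) {δ' : ℝ} (hδ'1 : δ' < 1) {a r : ℝ} (ha : 0 < a)
    (har : √(Module.finrank ℝ E) * a ≤ r) :
    ∀ᶠ n : ℕ in atTop,
      μ.real {ω | r < ‖(n : ℝ)⁻¹ • (∑ i ∈ Finset.range n, X (i + 1) ω) - ν‖ ∧
          ∀ i ∈ Finset.range n, ‖X (i + 1) ω - ν‖ < (n : ℝ) ^ ((1 : ℝ) - δ')} ≤
        2 * Module.finrank ℝ E * exp (-(a / 2) * (n : ℝ) ^ δ') := by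
  set σ2 := ∫ ω, ‖X 1 ω - ν‖ ^ 2 ∂μ with hσ2
  have hM : Tendsto (fun n : ℕ => (n : ℝ) ^ ((1 : ℝ) - δ')) atTop atTop :=
    (tendsto_rpow_atTop (by linarith)).comp tendsto_natCast_atTop_atTop
  filter_upwards [hM.eventually_ge_atTop (4 * σ2 / a), eventually_ne_atTop 0] with n hnM hn
  have hn' : (0 : ℝ) < n := Nat.cast_pos.mpr (Nat.pos_of_ne_zero hn)
  have hMpos : 0 < (n : ℝ) ^ ((1 : ℝ) - δ') := rpow_pos_of_pos hn' _
  have hratio : n / (n : ℝ) ^ ((1 : ℝ) - δ') = (n : ℝ) ^ δ' := by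
    rw [div_eq_iff hMpos.ne', ← rpow_add hn', add_sub_cancel, rpow_one]
  have hsmall : 2 * σ2 / (n : ℝ) ^ ((1 : ℝ) - δ') ≤ a / 2 := by
    rw [div_le_iff₀ hMpos]
    linarith [(div_le_iff₀ ha).mp hnM]
  refine (measureReal_norm_mean_sub_gt_le_exp hmeas hindep hident hν hmom hn hMpos
    ha.le har).trans ?_
  rw [hratio, ← hσ2]
  refine mul_le_mul_of_nonneg_left (exp_le_exp.mpr ?_) (by positivity)
  nlinarith [rpow_nonneg hn'.le δ']

end Mean

theorem stmt_8_general {Ω : Type*} [MeasurableSpace Ω] (μ : Measure Ω) [IsProbabilityMeasure μ]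
    (d : ℕ) (X : ℕ → Ω → EuclideanSpace ℝ (Fin d))
    (hmeas : ∀ i, Measurable (X i))
    (hindep : iIndepFun X μ)
    (hident : ∀ i : ℕ, IdentDistrib (X i) (X 1) μ μ)
    (ν : EuclideanSpace ℝ (Fin d)) (hν : ∫ ω, X 1 ω ∂μ = ν)
    (hmom : Integrable (fun ω => ‖X 1 ω‖ ^ 2) μ)
    (δ : ℝ) (hδ : 0 < δ) (δ' : ℝ) (hδ' : δ' ∈ Set.Ioo (0 : ℝ) 1)
    (γ : ℝ) :
    Tendsto (fun n : ℕ =>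
        (μ {ω | δ / 2 < ‖(n : ℝ)⁻¹ • (∑ i ∈ Finset.range n, X (i + 1) ω) - ν‖ ∧
            ∀ i ∈ Finset.range n, ‖X (i + 1) ω - ν‖ < (n : ℝ) ^ ((1 : ℝ) - δ')}).toReal
          * (n : ℝ) ^ γ)
      atTop (nhds 0) := by
  obtain ⟨hδ'0, hδ'1⟩ := hδ'
  -- the `+ 1` keeps `t` positive when `d = 0`
  set t := δ / (2 * (√d + 1))
  have ht : 0 < t := by positivity
  have hdt : √(Module.finrank ℝ (EuclideanSpace ℝ (Fin d))) * t ≤ δ / 2 := by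
    rw [finrank_euclideanSpace_fin, ← mul_div_assoc, div_le_div_iff₀ (by positivity) two_pos]
    nlinarith
  have hlim :=
    (tendsto_exp_neg_mul_rpow_mul_rpow_atTop (half_pos ht) hδ'0 γ).const_mul (2 * (d : ℝ))
  rw [mul_zero] at hlim
  refine tendsto_of_tendsto_of_tendsto_of_le_of_le' tendsto_const_nhds hlim
    (.of_forall fun n => by positivity) ?_
  filter_upwards [eventually_measureReal_norm_mean_sub_gt_le_exp hmeas hindep hident hν
    hmom hδ'1 ht hdt] with n hn
  rw [finrank_euclideanSpace_fin] at hn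
  rw [← mul_assoc]
  exact mul_le_mul_of_nonneg_right hn (rpow_nonneg (Nat.cast_nonneg n) γ)

/-- Superpolynomial decay of the probability that the empirical mean deviates while all
increments are small (`N_n = 0`). -/
theorem stmt_8 {Ω : Type*} [MeasurableSpace Ω] (μ : Measure Ω) [IsProbabilityMeasure μ]
    (d : ℕ) (X : ℕ → Ω → EuclideanSpace ℝ (Fin d))
    (hmeas : ∀ i, Measurable (X i))
    (hindep : iIndepFun X μ)
    (hident : ∀ i : ℕ, IdentDistrib (X i) (X 1) μ μ)
    (ν : EuclideanSpace ℝ (Fin d)) (hν : ∫ ω, X 1 ω ∂μ = ν)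
    (hmom : Integrable (fun ω => ‖X 1 ω‖ ^ 2) μ)
    (δ : ℝ) (hδ : 0 < δ) (δ' : ℝ) (hδ' : δ' ∈ Set.Ioo (0 : ℝ) 1)
    (γ : ℝ) (hγ : 0 < γ) :
    Tendsto (fun n : ℕ =>
        (μ {ω | δ / 2 < ‖(n : ℝ)⁻¹ • (∑ i ∈ Finset.range n, X (i + 1) ω) - ν‖ ∧
            ∀ i ∈ Finset.range n, ‖X (i + 1) ω - ν‖ < (n : ℝ) ^ ((1 : ℝ) - δ')}).toReal
          * (n : ℝ) ^ γ)
      atTop (nhds 0) :=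
  stmt_8_general μ d X hmeas hindep hident ν hν hmom δ hδ δ' hδ' γ
end

section
/- Let X_1,...,X_n be iid random variables with continuous strictly increasing CDF F near x_p where F(x_p) = p, F twice differentiable near x_p with bounded second derivative and F'(x_p) > 0, and E[X²] < ∞. Let Y_n denote the sample p-quantile. Then sup_{n ≥ 1/p} E[Y_n²] < ∞. -/
open MeasureTheory ProbabilityTheory

/-- The sample `p`-quantile `Y_n = (1-w_n) X_{([np])} + w_n X_{([np]+1)}` of a finite sample,
where `w_n = np - [np]` and `X_{(k)}` denotes the `k`-th order statistic. -/
noncomputable def sampleQuantile (p : ℝ) (l : List ℝ) : ℝ :=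
  let s := l.insertionSort (· ≤ ·)
  let k := ⌊(l.length : ℝ) * p⌋₊
  let w := (l.length : ℝ) * p - k
  (1 - w) * s.getD (k - 1) 0 + w * s.getD k 0

/-!
The bound is deterministic. With `k = ⌊np⌋`, the sample quantile is a convex combination of
the order statistics `X_(k) ≤ X_(k+1)`. At least `k > np/2` sample points lie at or below `X_(k)`
and at least `n - k ≥ n(1-p)` at or above `X_(k+1)`, so
`Y_n² ≤ min(X_(k), 0)² + max(X_(k+1), 0)² ≤ (2/p + 1/(1-p)) · (1/n) ∑ X_i²`.
As the `X_i` are identically distributed, `E[Y_n²] ≤ (2/p + 1/(1-p)) E[X_1²]` for all `n ≥ 1/p`.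
-/

lemma sq_min_zero_le_sq {a x : ℝ} (h : x ≤ a) : min a 0 ^ 2 ≤ x ^ 2 := by
  rcases le_total a 0 with ha | ha
  · rw [min_eq_left ha]; nlinarith
  · rw [min_eq_right ha]; simpa using sq_nonneg x

lemma sq_max_zero_le_sq {a x : ℝ} (h : a ≤ x) : max a 0 ^ 2 ≤ x ^ 2 := by
  rcases le_total a 0 with ha | ha
  · rw [max_eq_right ha]; simpa using sq_nonneg x
  · rw [max_eq_left ha]; nlinarith

lemma sq_le_sq_min_zero_add_sq_max_zero {a b y : ℝ} (hay : a ≤ y) (hyb : y ≤ b) :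
    y ^ 2 ≤ min a 0 ^ 2 + max b 0 ^ 2 := by
  rcases le_total y 0 with hy | hy
  · nlinarith [min_le_min_right 0 hay, min_eq_left hy, sq_nonneg (max b 0)]
  · nlinarith [max_le_max_right 0 hyb, max_eq_left hy, sq_nonneg (min a 0)]

lemma length_mul_sq_min_zero_le_sum_sq {l : List ℝ} {a : ℝ} (h : ∀ x ∈ l, x ≤ a) :
    l.length * min a 0 ^ 2 ≤ (l.map (· ^ 2)).sum := by
  have := List.card_nsmul_le_sum (l.map (· ^ 2)) _
    (by simpa using fun x hx => sq_min_zero_le_sq (h x hx))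
  rwa [List.length_map, nsmul_eq_mul] at this

lemma length_mul_sq_max_zero_le_sum_sq {l : List ℝ} {a : ℝ} (h : ∀ x ∈ l, a ≤ x) :
    l.length * max a 0 ^ 2 ≤ (l.map (· ^ 2)).sum := by
  have := List.card_nsmul_le_sum (l.map (· ^ 2)) _
    (by simpa using fun x hx => sq_max_zero_le_sq (h x hx))
  rwa [List.length_map, nsmul_eq_mul] at this

lemma sum_map_sq_le_of_sublist {l₁ l₂ : List ℝ} (h : l₁.Sublist l₂) :
    (l₁.map (· ^ 2)).sum ≤ (l₂.map (· ^ 2)).sum :=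
  (h.map _).sum_le_sum (by simp [sq_nonneg])

lemma List.Pairwise.getElem_le_getElem {α : Type*} [Preorder α] {s : List α}
    (hs : s.Pairwise (· ≤ ·)) {i j : ℕ} (hij : i ≤ j) (hj : j < s.length) : s[i] ≤ s[j] := by
  rcases hij.eq_or_lt with rfl | hlt
  · rfl
  · exact List.pairwise_iff_getElem.mp hs i j _ hj hlt

section Sorted

variable {s : List ℝ}

lemma succ_mul_sq_min_zero_getElem_le_sum_sq (hs : s.Pairwise (· ≤ ·)) {j : ℕ}
    (hj : j < s.length) : (j + 1 : ℝ) * min s[j] 0 ^ 2 ≤ (s.map (· ^ 2)).sum := by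
  have hle : ∀ x ∈ s.take (j + 1), x ≤ s[j] := by
    rintro x hx
    obtain ⟨i, hi, rfl⟩ := List.mem_take_iff_getElem.mp hx
    exact hs.getElem_le_getElem (by omega) hj
  have hlen : (s.take (j + 1)).length = j + 1 := by simp; omega
  calc (j + 1 : ℝ) * min s[j] 0 ^ 2 ≤ ((s.take (j + 1)).map (· ^ 2)).sum := by
        exact_mod_cast hlen ▸ length_mul_sq_min_zero_le_sum_sq hle
    _ ≤ (s.map (· ^ 2)).sum := sum_map_sq_le_of_sublist (List.take_sublist _ _)

lemma length_sub_mul_sq_max_zero_getElem_le_sum_sq (hs : s.Pairwise (· ≤ ·)) {j : ℕ}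
    (hj : j < s.length) : (s.length - j : ℝ) * max s[j] 0 ^ 2 ≤ (s.map (· ^ 2)).sum := by
  have hge : ∀ x ∈ s.drop j, s[j] ≤ x := by
    rintro x hx
    obtain ⟨i, hi, rfl⟩ := List.mem_drop_iff_getElem.mp hx
    exact hs.getElem_le_getElem (by omega) _
  have hlen : ((s.drop j).length : ℝ) = s.length - j := by simp [Nat.cast_sub hj.le]
  calc (s.length - j : ℝ) * max s[j] 0 ^ 2 ≤ ((s.drop j).map (· ^ 2)).sum := by
        exact hlen ▸ length_mul_sq_max_zero_le_sum_sq hge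
    _ ≤ (s.map (· ^ 2)).sum := sum_map_sq_le_of_sublist (List.drop_sublist _ _)

end Sorted

lemma sampleQuantile_sq_le {p : ℝ} (hp : p ∈ Set.Ioo (0 : ℝ) 1) (l : List ℝ)
    (hnp : 1 ≤ (l.length : ℝ) * p) :
    sampleQuantile p l ^ 2 ≤ (2 / p + 1 / (1 - p)) * ((l.map (· ^ 2)).sum / l.length) := by
  obtain ⟨hp0, hp1⟩ := hp
  set n : ℕ := l.length
  set s := l.insertionSort (· ≤ ·)
  set k := ⌊(n : ℝ) * p⌋₊
  set w : ℝ := n * p - k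
  set S := (l.map (· ^ 2)).sum
  have hk1 : 1 ≤ k := Nat.le_floor (by exact_mod_cast hnp)
  have hk_le : (k : ℝ) ≤ n * p := Nat.floor_le (by linarith)
  have hk_half : (n : ℝ) * p / 2 < k := Nat.div_two_lt_floor hnp
  have hn : (0 : ℝ) < n := by nlinarith
  have hkn : k < n := by
    have : (k : ℝ) < n := hk_le.trans_lt (by nlinarith)
    exact_mod_cast this
  have hs : s.Pairwise (· ≤ ·) := List.pairwise_insertionSort _ l
  have hlen : s.length = n := List.length_insertionSort _ l
  have hsum : (s.map (· ^ 2)).sum = S := ((List.perm_insertionSort _ l).map _).sum_eq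
  have hY : sampleQuantile p l = (1 - w) * s[k - 1] + w * s[k] := by
    rw [← List.getD_eq_getElem s 0, ← List.getD_eq_getElem s 0]
    rfl
  have hlow : (k : ℝ) * min s[k - 1] 0 ^ 2 ≤ S := by
    have h := succ_mul_sq_min_zero_getElem_le_sum_sq hs (j := k - 1) (by omega)
    rwa [hsum, ← Nat.cast_add_one, Nat.sub_add_cancel hk1] at h
  have hhigh : (n - k : ℝ) * max s[k] 0 ^ 2 ≤ S := by
    simpa only [hsum, hlen] using
      length_sub_mul_sq_max_zero_getElem_le_sum_sq hs (j := k) (by omega)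
  have hw : 0 ≤ w ∧ w ≤ 1 := ⟨by linarith, by linarith [Nat.lt_floor_add_one ((n : ℝ) * p)]⟩
  have hab : s[k - 1] ≤ s[k] := hs.getElem_le_getElem (Nat.sub_le k 1) _
  have hmin : min s[k - 1] 0 ^ 2 ≤ 2 * S / (n * p) := by
    rw [le_div_iff₀ (by positivity)]; nlinarith [sq_nonneg (min s[k - 1] 0)]
  have hmax : max s[k] 0 ^ 2 ≤ S / (n * (1 - p)) := by
    rw [le_div_iff₀ (by nlinarith)]; nlinarith [sq_nonneg (max s[k] 0)]
  calc sampleQuantile p l ^ 2 ≤ min s[k - 1] 0 ^ 2 + max s[k] 0 ^ 2 := by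
        rw [hY]; exact sq_le_sq_min_zero_add_sq_max_zero (by nlinarith) (by nlinarith)
    _ ≤ 2 * S / (n * p) + S / (n * (1 - p)) := add_le_add hmin hmax
    _ = (2 / p + 1 / (1 - p)) * (S / n) := by field_simp

section IdentDistrib

variable {Ω Ω' : Type*} [MeasurableSpace Ω] [MeasurableSpace Ω'] {μ : Measure Ω} {ν : Measure Ω'}

lemma ProbabilityTheory.IdentDistrib.integrable_sq {Y : Ω → ℝ} {Z : Ω' → ℝ}
    (h : IdentDistrib Y Z μ ν) (hZ : Integrable (fun ω => Z ω ^ 2) ν) :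
    Integrable (fun ω => Y ω ^ 2) μ :=
  (h.comp (measurable_id.pow_const 2)).integrable_iff.mpr hZ

lemma ProbabilityTheory.IdentDistrib.integral_sq_eq {Y : Ω → ℝ} {Z : Ω' → ℝ}
    (h : IdentDistrib Y Z μ ν) : ∫ ω, Y ω ^ 2 ∂μ = ∫ ω, Z ω ^ 2 ∂ν :=
  (h.comp (measurable_id.pow_const 2)).integral_eq

variable {X : ℕ → Ω → ℝ}

lemma integrable_sum_range_sq (hident : ∀ i, IdentDistrib (X i) (X 1) μ μ)
    (hmom : Integrable (fun ω => X 1 ω ^ 2) μ) (n : ℕ) :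
    Integrable (fun ω => ∑ i ∈ Finset.range n, X (i + 1) ω ^ 2) μ :=
  integrable_finsetSum _ fun i _ => (hident (i + 1)).integrable_sq hmom

lemma integral_sum_range_sq (hident : ∀ i, IdentDistrib (X i) (X 1) μ μ)
    (hmom : Integrable (fun ω => X 1 ω ^ 2) μ) (n : ℕ) :
    ∫ ω, ∑ i ∈ Finset.range n, X (i + 1) ω ^ 2 ∂μ = n * ∫ ω, X 1 ω ^ 2 ∂μ := by
  rw [integral_finsetSum _ fun i _ => (hident (i + 1)).integrable_sq hmom]
  simp [(hident _).integral_sq_eq]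

end IdentDistrib

theorem stmt_17_general {Ω : Type*} [MeasurableSpace Ω] (μ : Measure Ω)
    (X : ℕ → Ω → ℝ)
    (hident : ∀ i : ℕ, IdentDistrib (X i) (X 1) μ μ)
    (p : ℝ) (hp : p ∈ Set.Ioo (0 : ℝ) 1)
    (hmom : Integrable (fun ω => (X 1 ω) ^ 2) μ) :
    ∃ C : ℝ, ∀ n : ℕ, 1 / p ≤ (n : ℝ) →
      ∫ ω, (sampleQuantile p ((List.range n).map (fun i => X (i + 1) ω))) ^ 2 ∂μ ≤ C := by
  set c := 2 / p + 1 / (1 - p)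
  refine ⟨c * ∫ ω, X 1 ω ^ 2 ∂μ, fun n hn => ?_⟩
  have hnp : 1 ≤ (n : ℝ) * p := by rwa [div_le_iff₀ hp.1] at hn
  have hn0 : (n : ℝ) ≠ 0 := by rintro h; norm_num [h] at hnp
  have hbound (ω : Ω) : sampleQuantile p ((List.range n).map (fun i => X (i + 1) ω)) ^ 2 ≤
      c * ((∑ i ∈ Finset.range n, X (i + 1) ω ^ 2) / n) := by
    have h := sampleQuantile_sq_le hp ((List.range n).map (fun i => X (i + 1) ω))
      (by simpa using hnp)
    simpa only [List.length_map, List.length_range, List.map_map, Function.comp_def,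
      Finset.sum_eq_multiset_sum, Finset.range_val, Multiset.range, Multiset.map_coe,
      Multiset.sum_coe] using h
  calc _ ≤ ∫ ω, c * ((∑ i ∈ Finset.range n, X (i + 1) ω ^ 2) / n) ∂μ :=
        integral_mono_of_nonneg (ae_of_all _ fun _ => sq_nonneg _)
          (((integrable_sum_range_sq hident hmom n).div_const _).const_mul _) (ae_of_all _ hbound)
    _ = c * ∫ ω, X 1 ω ^ 2 ∂μ := by
        rw [integral_const_mul, integral_div, integral_sum_range_sq hident hmom,
          mul_div_cancel_left₀ _ hn0]

/-- Uniform second-moment bound for sample quantiles: `sup_{n ≥ 1/p} E[Y_n²] < ∞`. -/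
theorem stmt_17 {Ω : Type*} [MeasurableSpace Ω] (μ : Measure Ω) [IsProbabilityMeasure μ]
    (X : ℕ → Ω → ℝ) (hXmeas : ∀ i, Measurable (X i))
    (hindep : iIndepFun X μ)
    (hident : ∀ i : ℕ, IdentDistrib (X i) (X 1) μ μ)
    (p : ℝ) (hp : p ∈ Set.Ioo (0 : ℝ) 1)
    (F : ℝ → ℝ) (hF : ∀ x, F x = (μ {ω | X 1 ω ≤ x}).toReal)
    (xp : ℝ) (hxp : F xp = p)
    (ε : ℝ) (hε : 0 < ε)
    (hFsmooth : ContDiffOn ℝ 2 F (Metric.ball xp ε))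
    (hFmono : StrictMonoOn F (Metric.ball xp ε))
    (hFsecond : ∃ K : ℝ, ∀ x ∈ Metric.ball xp ε, |deriv (deriv F) x| ≤ K)
    (hfpos : 0 < deriv F xp)
    (hmom : Integrable (fun ω => (X 1 ω) ^ 2) μ) :
    ∃ C : ℝ, ∀ n : ℕ, 1 / p ≤ (n : ℝ) →
      ∫ ω, (sampleQuantile p ((List.range n).map (fun i => X (i + 1) ω))) ^ 2 ∂μ ≤ C :=
  stmt_17_general μ X hident p hp hmom
end

section
/- Under the Bahadur representation Y_n = x_p + (np − Z_n)/(n f(x_p)) + R_n with R_n = O(n^{−3/4} log n) a.s., the multilevel quantile difference Δ_n = Y_{2^{n+1}} − (1/2)(Y^O_{2^n} + Y^E_{2^n}) satisfies Δ_n = R_{2^{n+1}} − (1/2)(R^O_{2^n} + R^E_{2^n}) = O(n·2^{−3n/4}) almost surely; in particular Δ_n² = O(n²·2^{−3n/2}). -/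
/-!
Since `Z_{2^{n+1}} = Z^O_{2^n} + Z^E_{2^n}`, the linear Bahadur term of the full sample is the
average of those of the two half samples, so `Δ_n` only sees the remainders. The rate
`(n+1) 2^{-3n/4}` at most doubles under `n ↦ n + 1`, so the remainder of the full sample obeys
the same bound as the two half samples, with a doubled constant.
-/

open MeasureTheory

theorem bahadur_linear_term_two_mul (p f N a b : ℝ) :
    (N * 2 * p - (a + b)) / (N * 2 * f) = ((N * p - a) / (N * f) + (N * p - b) / (N * f)) / 2 := by
  rw [← add_div, div_div]
  ring_nf

theorem abs_sub_half_add_le {x y z a b c : ℝ} (hx : |x| ≤ a) (hy : |y| ≤ b) (hz : |z| ≤ c) :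
    |x - (y + z) / 2| ≤ a + (b + c) / 2 := by
  have hyz : |(y + z) / 2| ≤ (b + c) / 2 := by
    rw [abs_div, abs_two]
    linarith [abs_add_le y z]
  linarith [abs_sub x ((y + z) / 2)]

section RateBound

variable {g : ℕ → ℝ} {u : ℕ → ℝ} {C : ℝ}

theorem nonneg_const_of_abs_le (hg : ∀ n, 0 < g n) (hu : ∀ n, |u n| ≤ C * ((n : ℝ) + 1) * g n) :
    0 ≤ C := by
  have h0 := (abs_nonneg _).trans (hu 0)
  rw [Nat.cast_zero, zero_add, mul_one] at h0
  exact nonneg_of_mul_nonneg_left h0 (hg 0)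

theorem abs_succ_le_of_abs_le (hg : ∀ n, 0 < g n) (hg_succ : ∀ n, g (n + 1) ≤ g n)
    (hu : ∀ n, |u n| ≤ C * ((n : ℝ) + 1) * g n) (n : ℕ) :
    |u (n + 1)| ≤ 2 * C * ((n : ℝ) + 1) * g n := by
  have hC := nonneg_const_of_abs_le hg hu
  calc |u (n + 1)| ≤ C * ((n : ℝ) + 1 + 1) * g (n + 1) := by exact_mod_cast hu (n + 1)
    _ ≤ C * (2 * ((n : ℝ) + 1)) * g n := by
        gcongr
        · exact (hg _).le
        · linarith [(Nat.cast_nonneg n : (0 : ℝ) ≤ n)]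
        · exact hg_succ n
    _ = 2 * C * ((n : ℝ) + 1) * g n := by ring

end RateBound

theorem two_rpow_neg_three_quarters_succ_le (n : ℕ) :
    (2 : ℝ) ^ (-(3 * ((n + 1 : ℕ) : ℝ) / 4)) ≤ (2 : ℝ) ^ (-(3 * (n : ℝ) / 4)) := by
  apply Real.rpow_le_rpow_of_exponent_le one_le_two
  push_cast
  linarith

theorem sq_le_of_abs_le_mul_two_rpow {x C a t : ℝ} (h : |x| ≤ C * a * (2 : ℝ) ^ (-t)) :
    x ^ 2 ≤ C ^ 2 * a ^ 2 * (2 : ℝ) ^ (-(2 * t)) := by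
  have hsq := pow_le_pow_left₀ (abs_nonneg x) h 2
  rw [sq_abs] at hsq
  calc x ^ 2 ≤ (C * a * (2 : ℝ) ^ (-t)) ^ 2 := hsq
    _ = C ^ 2 * a ^ 2 * (2 : ℝ) ^ (-t * (2 : ℕ)) := by
        rw [Real.rpow_mul_natCast zero_le_two]
        ring
    _ = C ^ 2 * a ^ 2 * (2 : ℝ) ^ (-(2 * t)) := by ring_nf

theorem stmt_18_general {Ω : Type*} [MeasurableSpace Ω] (μ : Measure Ω)
    (p xp fxp : ℝ)
    (Y YO YE Z ZO ZE R RO RE : ℕ → Ω → ℝ)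
    (hZ : ∀ n : ℕ, ∀ ω, Z (2 ^ (n + 1)) ω = ZO (2 ^ n) ω + ZE (2 ^ n) ω)
    (hY : ∀ n : ℕ, ∀ ω, Y n ω = xp + ((n : ℝ) * p - Z n ω) / ((n : ℝ) * fxp) + R n ω)
    (hYO : ∀ n : ℕ, ∀ ω, YO n ω = xp + ((n : ℝ) * p - ZO n ω) / ((n : ℝ) * fxp) + RO n ω)
    (hYE : ∀ n : ℕ, ∀ ω, YE n ω = xp + ((n : ℝ) * p - ZE n ω) / ((n : ℝ) * fxp) + RE n ω)
    (hR : ∀ᵐ ω ∂μ, ∃ C : ℝ, ∀ n : ℕ, |R (2 ^ n) ω| ≤ C * ((n : ℝ) + 1) * (2 : ℝ) ^ (-(3 * (n : ℝ) / 4)))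
    (hRO : ∀ᵐ ω ∂μ, ∃ C : ℝ, ∀ n : ℕ, |RO (2 ^ n) ω| ≤ C * ((n : ℝ) + 1) * (2 : ℝ) ^ (-(3 * (n : ℝ) / 4)))
    (hRE : ∀ᵐ ω ∂μ, ∃ C : ℝ, ∀ n : ℕ, |RE (2 ^ n) ω| ≤ C * ((n : ℝ) + 1) * (2 : ℝ) ^ (-(3 * (n : ℝ) / 4))) :
    (∀ n : ℕ, ∀ ω,
      Y (2 ^ (n + 1)) ω - (YO (2 ^ n) ω + YE (2 ^ n) ω) / 2
        = R (2 ^ (n + 1)) ω - (RO (2 ^ n) ω + RE (2 ^ n) ω) / 2) ∧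
    (∀ᵐ ω ∂μ, ∃ C : ℝ, ∀ n : ℕ,
      |Y (2 ^ (n + 1)) ω - (YO (2 ^ n) ω + YE (2 ^ n) ω) / 2|
          ≤ C * ((n : ℝ) + 1) * (2 : ℝ) ^ (-(3 * (n : ℝ) / 4)) ∧
      (Y (2 ^ (n + 1)) ω - (YO (2 ^ n) ω + YE (2 ^ n) ω) / 2) ^ 2
          ≤ C ^ 2 * ((n : ℝ) + 1) ^ 2 * (2 : ℝ) ^ (-(3 * (n : ℝ) / 2))) := by
  have cancel : ∀ n : ℕ, ∀ ω,
      Y (2 ^ (n + 1)) ω - (YO (2 ^ n) ω + YE (2 ^ n) ω) / 2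
        = R (2 ^ (n + 1)) ω - (RO (2 ^ n) ω + RE (2 ^ n) ω) / 2 := by
    intro n ω
    rw [hY, hYO, hYE, hZ, Nat.cast_pow, Nat.cast_pow, pow_succ, Nat.cast_ofNat,
      bahadur_linear_term_two_mul]
    ring
  refine ⟨cancel, ?_⟩
  filter_upwards [hR, hRO, hRE] with ω ⟨C₁, h₁⟩ ⟨C₂, h₂⟩ ⟨C₃, h₃⟩
  refine ⟨2 * C₁ + (C₂ + C₃) / 2, fun n => ?_⟩
  have hΔ : |Y (2 ^ (n + 1)) ω - (YO (2 ^ n) ω + YE (2 ^ n) ω) / 2|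
      ≤ (2 * C₁ + (C₂ + C₃) / 2) * ((n : ℝ) + 1) * (2 : ℝ) ^ (-(3 * (n : ℝ) / 4)) := by
    have h₁_succ := abs_succ_le_of_abs_le (fun _ => Real.rpow_pos_of_pos two_pos _)
      two_rpow_neg_three_quarters_succ_le h₁ n
    rw [cancel]
    refine (abs_sub_half_add_le h₁_succ (h₂ n) (h₃ n)).trans_eq ?_
    ring
  refine ⟨hΔ, ?_⟩
  convert sq_le_of_abs_le_mul_two_rpow hΔ using 3
  ring

/-- Cancellation of the linear (Bahadur) term in the multilevel quantile difference:
`Δ_n = Y_{2^{n+1}} − (Y^O_{2^n}+Y^E_{2^n})/2 = R_{2^{n+1}} − (R^O_{2^n}+R^E_{2^n})/2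
     = O(n·2^{−3n/4})` a.s., hence `Δ_n² = O(n²·2^{−3n/2})`. -/
theorem stmt_18 {Ω : Type*} [MeasurableSpace Ω] (μ : Measure Ω) [IsProbabilityMeasure μ]
    (p xp fxp : ℝ) (hf : fxp ≠ 0)
    (Y YO YE Z ZO ZE R RO RE : ℕ → Ω → ℝ)
    (hZ : ∀ n : ℕ, ∀ ω, Z (2 ^ (n + 1)) ω = ZO (2 ^ n) ω + ZE (2 ^ n) ω)
    (hY : ∀ n : ℕ, ∀ ω, Y n ω = xp + ((n : ℝ) * p - Z n ω) / ((n : ℝ) * fxp) + R n ω)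
    (hYO : ∀ n : ℕ, ∀ ω, YO n ω = xp + ((n : ℝ) * p - ZO n ω) / ((n : ℝ) * fxp) + RO n ω)
    (hYE : ∀ n : ℕ, ∀ ω, YE n ω = xp + ((n : ℝ) * p - ZE n ω) / ((n : ℝ) * fxp) + RE n ω)
    (hR : ∀ᵐ ω ∂μ, ∃ C : ℝ, ∀ n : ℕ, |R (2 ^ n) ω| ≤ C * ((n : ℝ) + 1) * (2 : ℝ) ^ (-(3 * (n : ℝ) / 4)))
    (hRO : ∀ᵐ ω ∂μ, ∃ C : ℝ, ∀ n : ℕ, |RO (2 ^ n) ω| ≤ C * ((n : ℝ) + 1) * (2 : ℝ) ^ (-(3 * (n : ℝ) / 4)))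
    (hRE : ∀ᵐ ω ∂μ, ∃ C : ℝ, ∀ n : ℕ, |RE (2 ^ n) ω| ≤ C * ((n : ℝ) + 1) * (2 : ℝ) ^ (-(3 * (n : ℝ) / 4))) :
    (∀ n : ℕ, ∀ ω,
      Y (2 ^ (n + 1)) ω - (YO (2 ^ n) ω + YE (2 ^ n) ω) / 2
        = R (2 ^ (n + 1)) ω - (RO (2 ^ n) ω + RE (2 ^ n) ω) / 2) ∧
    (∀ᵐ ω ∂μ, ∃ C : ℝ, ∀ n : ℕ,
      |Y (2 ^ (n + 1)) ω - (YO (2 ^ n) ω + YE (2 ^ n) ω) / 2|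
          ≤ C * ((n : ℝ) + 1) * (2 : ℝ) ^ (-(3 * (n : ℝ) / 4)) ∧
      (Y (2 ^ (n + 1)) ω - (YO (2 ^ n) ω + YE (2 ^ n) ω) / 2) ^ 2
          ≤ C ^ 2 * ((n : ℝ) + 1) ^ 2 * (2 : ℝ) ^ (-(3 * (n : ℝ) / 2))) :=
  stmt_18_general μ p xp fxp Y YO YE Z ZO ZE R RO RE hZ hY hYO hYE hR hRO hRE
end

section
/- Let Δ_n be random variables with E[Δ_n²] ≤ C·n²·2^{−3n/2} for all n ≥ n_b, and let N be geometric on {n_b, n_b+1, ...} with p(n) = r(1−r)^{n−n_b} where 1/2 < r < 1 − 2^{−3/2}. Then ∑_{n=n_b}^∞ E[Δ_n²]/p(n) < ∞, so Z = Δ_N/p(N) (with N independent of (Δ_n)) has finite second moment, while the expected number of samples E[2^{N+1}] < ∞. -/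
/-!
Conditioning on `N = n` and using the independence of `N` and `(Δ_n)`, the second moment of
`Z = Δ_N / p(N)` is `∑ P(N = n) E[Δ_n²] / p(n)² = ∑ E[Δ_n²] / p(n)`, whose terms are
`O(n² (2^{-3/2} / (1 - r))^n)`; this converges because `2^{-3/2} < 1 - r`. In the same way
`E[2^{N+1}] = 2^{n_b+1} r ∑ (2(1 - r))^k`, which converges because `r > 1/2`.
-/

open MeasureTheory ProbabilityTheory
open scoped ENNReal

section

variable {Ω : Type*} [MeasurableSpace Ω] {μ : Measure Ω}

theorem tsum_nat_eq_tsum_add_of_eq_zero {α : Type*} [AddCommMonoid α] [TopologicalSpace α]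
    {f : ℕ → α} (m : ℕ) (hf : ∀ n < m, f n = 0) : ∑' n, f n = ∑' k, f (k + m) := by
  refine ((add_left_injective m).tsum_eq fun n hn => ?_).symm
  have hmn : m ≤ n := not_lt.1 fun h => hn (hf n h)
  exact ⟨n - m, Nat.sub_add_cancel hmn⟩

theorem measurable_apply_index {β : Type*} [MeasurableSpace β] {X : ℕ → Ω → β}
    (hX : ∀ n, Measurable (X n)) {N : Ω → ℕ} (hN : Measurable N) :
    Measurable fun ω => X (N ω) ω :=
  (measurable_from_prod_countable_left (f := fun p : Ω × ℕ => X p.2 p.1) hX).comp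
    (measurable_id.prodMk hN)

theorem lintegral_apply_index_eq_tsum {N : Ω → ℕ} (hN : Measurable N) (X : ℕ → Ω → ℝ≥0∞) :
    ∫⁻ ω, X (N ω) ω ∂μ = ∑' n, ∫⁻ ω in N ⁻¹' {n}, X n ω ∂μ := by
  have hfibre : ∀ n, MeasurableSet (N ⁻¹' {n}) := fun n => hN (measurableSet_singleton n)
  rw [← setLIntegral_univ, ← Set.preimage_univ (f := N), ← Set.iUnion_of_singleton ℕ,
    Set.preimage_iUnion, lintegral_iUnion hfibre (pairwise_disjoint_fiber N)]
  exact tsum_congr fun n => setLIntegral_congr_fun (hfibre n) fun ω hω => by rw [hω]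

theorem setLIntegral_preimage_eq_measure_mul_of_indepFun {β : Type*} [MeasurableSpace β]
    {N : Ω → β} {Y : Ω → ℝ≥0∞} (hN : Measurable N) (hY : Measurable Y) (hind : IndepFun N Y μ)
    {s : Set β} (hs : MeasurableSet s) :
    ∫⁻ ω in N ⁻¹' s, Y ω ∂μ = μ (N ⁻¹' s) * ∫⁻ ω, Y ω ∂μ := by
  have hind_indicator : IndepFun ((N ⁻¹' s).indicator 1) Y μ :=
    hind.comp (φ := s.indicator (1 : β → ℝ≥0∞)) (measurable_one.indicator hs) measurable_id
  rw [← lintegral_indicator (hN hs), ← lintegral_indicator_one (hN hs),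
    ← lintegral_mul_eq_lintegral_mul_lintegral_of_indepFun (measurable_one.indicator (hN hs)) hY
      hind_indicator]
  refine lintegral_congr fun ω => ?_
  by_cases h : ω ∈ N ⁻¹' s <;> simp [h]

theorem lintegral_apply_index_eq_tsum_of_indepFun {β : Type*} [MeasurableSpace β] {N : Ω → ℕ}
    (hN : Measurable N) {X : ℕ → Ω → β} (hX : ∀ n, Measurable (X n))
    (hind : IndepFun N (fun ω n => X n ω) μ) {f : ℕ → β → ℝ≥0∞} (hf : ∀ n, Measurable (f n)) :
    ∫⁻ ω, f (N ω) (X (N ω) ω) ∂μ = ∑' n, μ (N ⁻¹' {n}) * ∫⁻ ω, f n (X n ω) ∂μ := by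
  rw [lintegral_apply_index_eq_tsum hN fun n ω => f n (X n ω)]
  exact tsum_congr fun n => setLIntegral_preimage_eq_measure_mul_of_indepFun hN
    ((hf n).comp (hX n)) (hind.comp measurable_id ((hf n).comp (measurable_pi_apply n)))
    (measurableSet_singleton n)

theorem tsum_measure_preimage_mul_eq_tsum_add {N : Ω → ℕ} {nb : ℕ} (hNnb : ∀ ω, nb ≤ N ω)
    {p : ℕ → ℝ} (hlaw : ∀ n, nb ≤ n → μ (N ⁻¹' {n}) = ENNReal.ofReal (p n)) (c : ℕ → ℝ≥0∞) :
    ∑' n, μ (N ⁻¹' {n}) * c n = ∑' k, ENNReal.ofReal (p (k + nb)) * c (k + nb) := by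
  have hempty : ∀ n < nb, N ⁻¹' {n} = ∅ := fun n hn =>
    Set.eq_empty_of_forall_notMem fun ω hω => (hn.trans_le (hNnb ω)).ne' hω
  rw [tsum_nat_eq_tsum_add_of_eq_zero nb fun n hn => by rw [hempty n hn, measure_empty, zero_mul]]
  exact tsum_congr fun k => by rw [hlaw _ (Nat.le_add_left nb k)]

theorem lintegral_sq_div_apply_index_eq_tsum {N : Ω → ℕ} (hN : Measurable N) {nb : ℕ}
    (hNnb : ∀ ω, nb ≤ N ω) {p : ℕ → ℝ} (hp : ∀ n, nb ≤ n → 0 < p n)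
    (hlaw : ∀ n, nb ≤ n → μ (N ⁻¹' {n}) = ENNReal.ofReal (p n)) {Δ : ℕ → Ω → ℝ}
    (hΔ : ∀ n, Measurable (Δ n)) (hΔsq : ∀ n, Integrable (fun ω => Δ n ω ^ 2) μ)
    (hind : IndepFun N (fun ω n => Δ n ω) μ) :
    ∫⁻ ω, ENNReal.ofReal ((Δ (N ω) ω / p (N ω)) ^ 2) ∂μ =
      ∑' k, ENNReal.ofReal ((∫ ω, Δ (k + nb) ω ^ 2 ∂μ) / p (k + nb)) := by
  rw [lintegral_apply_index_eq_tsum_of_indepFun hN hΔ hind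
      (f := fun n x => ENNReal.ofReal ((x / p n) ^ 2))
      fun n => ((measurable_id.div_const _).pow_const 2).ennreal_ofReal,
    tsum_measure_preimage_mul_eq_tsum_add hNnb hlaw]
  refine tsum_congr fun k => ?_
  have hpk := hp (k + nb) (Nat.le_add_left nb k)
  simp_rw [div_pow]
  rw [← ofReal_integral_eq_lintegral_ofReal ((hΔsq _).div_const _)
      (ae_of_all _ fun ω => by positivity), ← ENNReal.ofReal_mul hpk.le, integral_div]
  congr 1
  field_simp

theorem lintegral_comp_eq_tsum_of_law {N : Ω → ℕ} (hN : Measurable N) {nb : ℕ}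
    (hNnb : ∀ ω, nb ≤ N ω) {p : ℕ → ℝ}
    (hlaw : ∀ n, nb ≤ n → μ (N ⁻¹' {n}) = ENNReal.ofReal (p n)) (f : ℕ → ℝ≥0∞) :
    ∫⁻ ω, f (N ω) ∂μ = ∑' k, ENNReal.ofReal (p (k + nb)) * f (k + nb) := by
  rw [lintegral_apply_index_eq_tsum hN fun n _ => f n]
  simp only [setLIntegral_const, mul_comm _ (μ _)]
  exact tsum_measure_preimage_mul_eq_tsum_add hNnb hlaw f

theorem integrable_of_lintegral_ofReal_eq_tsum {f : Ω → ℝ} (hf : AEStronglyMeasurable f μ)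
    (hf0 : 0 ≤ᵐ[μ] f) {a : ℕ → ℝ} (ha0 : ∀ k, 0 ≤ a k) (ha : Summable a)
    (h : ∫⁻ ω, ENNReal.ofReal (f ω) ∂μ = ∑' k, ENNReal.ofReal (a k)) : Integrable f μ :=
  (lintegral_ofReal_ne_top_iff_integrable hf hf0).1 <| by
    rw [h, ← ENNReal.ofReal_tsum_of_nonneg ha0 ha]
    exact ENNReal.ofReal_ne_top

end

theorem summable_div_geometric_of_le_sq_mul_geometric {a : ℕ → ℝ} {nb : ℕ} {C r s ρ : ℝ}
    (hr : 0 < r) (hs : 0 ≤ s) (hsρ : s < ρ) (ha0 : ∀ n, 0 ≤ a n)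
    (ha : ∀ n, nb ≤ n → a n ≤ C * n ^ 2 * s ^ n) :
    Summable fun k => a (k + nb) / (r * ρ ^ k) := by
  have hρ : 0 < ρ := hs.trans_lt hsρ
  have hq : ‖s / ρ‖ < 1 := by
    rw [Real.norm_eq_abs, abs_of_nonneg (div_nonneg hs hρ.le), div_lt_one hρ]
    exact hsρ
  have hbound : Summable fun k : ℕ =>
      C * ρ ^ nb / r * (((k + nb : ℕ) : ℝ) ^ 2 * (s / ρ) ^ (k + nb)) :=
    ((_root_.summable_nat_add_iff nb).2
      (summable_pow_mul_geometric_of_norm_lt_one (R := ℝ) 2 hq)).mul_left _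
  refine hbound.of_nonneg_of_le (fun k => div_nonneg (ha0 _) (by positivity)) fun k => ?_
  calc a (k + nb) / (r * ρ ^ k) ≤ C * ((k + nb : ℕ) : ℝ) ^ 2 * s ^ (k + nb) / (r * ρ ^ k) :=
        div_le_div_of_nonneg_right (ha _ (Nat.le_add_left nb k)) (by positivity)
    _ = _ := by
        rw [div_pow, pow_add ρ]
        field_simp

theorem summable_geometric_mul_two_pow {r : ℝ} (hr : 1 / 2 < r) (hr1 : r < 1) (nb : ℕ) :
    Summable fun k : ℕ => r * (1 - r) ^ k * 2 ^ (k + nb + 1) := by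
  refine ((summable_geometric_of_lt_one (by linarith) (by linarith : 2 * (1 - r) < 1)).mul_left
    (r * 2 ^ (nb + 1))).congr fun k => ?_
  rw [mul_pow]
  ring

theorem stmt_19_general {Ω : Type*} [MeasurableSpace Ω] (μ : Measure Ω)
    (nb : ℕ) (r : ℝ) (hr : r ∈ Set.Ioo (1 / 2 : ℝ) (1 - 2 ^ (-(3 / 2 : ℝ))))
    (N : Ω → ℕ) (hN : Measurable N) (hNnb : ∀ ω, nb ≤ N ω)
    (hgeo : ∀ n : ℕ, nb ≤ n → μ {ω | N ω = n} = ENNReal.ofReal (r * (1 - r) ^ (n - nb)))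
    (Δ : ℕ → Ω → ℝ) (hΔmeas : ∀ n, Measurable (Δ n))
    (hΔsq : ∀ n, Integrable (fun ω => (Δ n ω) ^ 2) μ)
    (C : ℝ)
    (hbound : ∀ n : ℕ, nb ≤ n →
      ∫ ω, (Δ n ω) ^ 2 ∂μ ≤ C * (n : ℝ) ^ 2 * (2 : ℝ) ^ (-(3 * (n : ℝ) / 2)))
    (hindep : IndepFun N (fun ω => fun n => Δ n ω) μ) :
    Summable (fun k : ℕ => (∫ ω, (Δ (k + nb) ω) ^ 2 ∂μ) / (r * (1 - r) ^ k)) ∧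
    Integrable (fun ω => (Δ (N ω) ω / (r * (1 - r) ^ (N ω - nb))) ^ 2) μ ∧
    Integrable (fun ω => (2 : ℝ) ^ (N ω + 1)) μ := by
  obtain ⟨hr_half, hr_lt⟩ := hr
  have hs : (0 : ℝ) < 2 ^ (-(3 / 2 : ℝ)) := by positivity
  have hr0 : 0 < r := by linarith
  have hr1 : 0 < 1 - r := by linarith
  have hp : ∀ n, nb ≤ n → 0 < r * (1 - r) ^ (n - nb) := fun n _ => by positivity
  have hmoment : ∀ n, 0 ≤ ∫ ω, Δ n ω ^ 2 ∂μ := fun n => integral_nonneg fun ω => sq_nonneg _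
  have hsum := summable_div_geometric_of_le_sq_mul_geometric (C := C) hr0 hs.le
    (by linarith : _ < 1 - r) hmoment
    fun n hn => (hbound n hn).trans_eq <| by
      rw [← Real.rpow_mul_natCast zero_le_two]
      ring_nf
  refine ⟨hsum, ?_, ?_⟩
  · refine integrable_of_lintegral_ofReal_eq_tsum
      (measurable_apply_index (X := fun n ω => (Δ n ω / (r * (1 - r) ^ (n - nb))) ^ 2)
        (fun n => ((hΔmeas n).div_const _).pow_const 2) hN).aestronglyMeasurable
      (ae_of_all _ fun ω => sq_nonneg _) (fun k => div_nonneg (hmoment _) (by positivity)) hsum ?_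
    rw [lintegral_sq_div_apply_index_eq_tsum hN hNnb hp hgeo hΔmeas hΔsq hindep]
    simp only [Nat.add_sub_cancel]
  · refine integrable_of_lintegral_ofReal_eq_tsum
      (measurable_apply_index (X := fun n _ => (2 : ℝ) ^ (n + 1)) (fun _ => measurable_const)
        hN).aestronglyMeasurable
      (ae_of_all _ fun ω => by positivity) (fun k => by positivity)
      (summable_geometric_mul_two_pow hr_half (by linarith) nb) ?_
    rw [lintegral_comp_eq_tsum_of_law hN hNnb hgeo fun n => ENNReal.ofReal (2 ^ (n + 1))]
    simp only [Nat.add_sub_cancel]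
    exact tsum_congr fun k => (ENNReal.ofReal_mul (by positivity)).symm

/-- Finite second moment and finite expected sampling cost of the randomized quantile
estimator `Z = Δ_N / p(N)` with a shifted geometric `N` on `{n_b, n_b+1, …}` with
`1/2 < r < 1 − 2^{−3/2}`. -/
theorem stmt_19 {Ω : Type*} [MeasurableSpace Ω] (μ : Measure Ω) [IsProbabilityMeasure μ]
    (nb : ℕ) (r : ℝ) (hr : r ∈ Set.Ioo (1 / 2 : ℝ) (1 - 2 ^ (-(3 / 2 : ℝ))))
    (N : Ω → ℕ) (hN : Measurable N) (hNnb : ∀ ω, nb ≤ N ω)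
    (hgeo : ∀ n : ℕ, nb ≤ n → μ {ω | N ω = n} = ENNReal.ofReal (r * (1 - r) ^ (n - nb)))
    (Δ : ℕ → Ω → ℝ) (hΔmeas : ∀ n, Measurable (Δ n))
    (hΔsq : ∀ n, Integrable (fun ω => (Δ n ω) ^ 2) μ)
    (C : ℝ) (hC : 0 < C)
    (hbound : ∀ n : ℕ, nb ≤ n →
      ∫ ω, (Δ n ω) ^ 2 ∂μ ≤ C * (n : ℝ) ^ 2 * (2 : ℝ) ^ (-(3 * (n : ℝ) / 2)))
    (hindep : IndepFun N (fun ω => fun n => Δ n ω) μ) :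
    Summable (fun k : ℕ => (∫ ω, (Δ (k + nb) ω) ^ 2 ∂μ) / (r * (1 - r) ^ k)) ∧
    Integrable (fun ω => (Δ (N ω) ω / (r * (1 - r) ^ (N ω - nb))) ^ 2) μ ∧
    Integrable (fun ω => (2 : ℝ) ^ (N ω + 1)) μ :=
  stmt_19_general μ nb r hr N hN hNnb hgeo Δ hΔmeas hΔsq C hbound hindep
end
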